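/- arXiv:2308.12872 — 4 statements merged into one kernel-verified Lean document; each statement's English description precedes it below -/
import Mathlib

section
/- Assume the context (two periodic Zeckendorf collections with E ⊊ Ẽ, fundamental sequences H and H̃, and counting function z). For every nonzero μ ∈ Ẽ, the set {ε ∈ E : ε <_a μ} is finite and nonempty; let μ̌ be its <_a-largest element and let μ̄ be the <_a-smallest element of E with μ̌ <_a μ̄. Then z(Σ_k μ_k H̃_k) = Σ_k μ̄_k H_k. -/
open Filter Topology

namespace Zeck

-- A coefficient function is `μ : ℕ → ℕ`; index `0` is unused (members vanish there).

/-- The maximal L-block `θ^n` at index `n-1`, for `L = (e 1, …, e N)`. -/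
def maxBlock (N : ℕ) (e : ℕ → ℕ) (n : ℕ) : ℕ → ℕ :=
  fun k => if 1 ≤ k ∧ k < n then e ((n - k - 1) % N + 1) else 0

/-- A proper L-block at index `n-1` with support interval `[a, n-1]`. -/
def IsProperBlock (N : ℕ) (e : ℕ → ℕ) (ζ : ℕ → ℕ) (a n : ℕ) : Prop :=
  2 ≤ n ∧ 1 ≤ a ∧ a ≤ n - 1 ∧ (∀ j, a < j → ζ j = maxBlock N e n j) ∧
    ζ a < maxBlock N e n a ∧ (∀ j, j < a → ζ j = 0)

/-- An L-block (proper or maximal), together with its support interval. -/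
def IsBlock (N : ℕ) (e : ℕ → ℕ) (ζ : ℕ → ℕ) (I : Finset ℕ) : Prop :=
  ∃ n, 2 ≤ n ∧ ((ζ = maxBlock N e n ∧ I = Finset.Icc 1 (n - 1)) ∨
    (∃ a, IsProperBlock N e ζ a n ∧ I = Finset.Icc a (n - 1)))

/-- Membership in the periodic Zeckendorf collection for positive integers determined by L:
finite sums of L-blocks with pairwise disjoint support intervals (the zero function has `l = 0`). -/
def memColl (N : ℕ) (e : ℕ → ℕ) (μ : ℕ → ℕ) : Prop :=
  ∃ (l : ℕ) (ζ : ℕ → ℕ → ℕ) (I : ℕ → Finset ℕ),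
    (∀ i, i < l → IsBlock N e (ζ i) (I i)) ∧
    (∀ i j, i < l → j < l → i ≠ j → Disjoint (I i) (I j)) ∧
    ∀ k, μ k = ∑ i ∈ Finset.range l, ζ i k

/-- The maximal L*-block `β̄^n` at index `n`. -/
def maxStarBlock (N : ℕ) (e : ℕ → ℕ) (n : ℕ) : ℕ → ℕ :=
  fun k => if n ≤ k then e ((k - n) % N + 1) else 0

/-- A proper L*-block at index `n` with support interval `[n, b]`. -/
def IsProperStarBlock (N : ℕ) (e : ℕ → ℕ) (ζ : ℕ → ℕ) (n b : ℕ) : Prop :=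
  1 ≤ n ∧ n ≤ b ∧ (∀ j, j < b → ζ j = maxStarBlock N e n j) ∧
    ζ b < maxStarBlock N e n b ∧ (∀ j, b < j → ζ j = 0)

/-- Membership in the periodic Zeckendorf collection for `(0,1)` determined by L:
nonzero finite or infinite sums of proper L*-blocks with pairwise disjoint support intervals. -/
def memStar (N : ℕ) (e : ℕ → ℕ) (ε : ℕ → ℕ) : Prop :=
  ε ≠ 0 ∧ ∃ (l : ℕ∞) (ζ : ℕ → ℕ → ℕ) (nb : ℕ → ℕ × ℕ),
    (∀ i : ℕ, (i : ℕ∞) < l → IsProperStarBlock N e (ζ i) (nb i).1 (nb i).2) ∧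
    (∀ i j : ℕ, (i : ℕ∞) < l → (j : ℕ∞) < l → i ≠ j →
      Disjoint (Finset.Icc (nb i).1 (nb i).2) (Finset.Icc (nb j).1 (nb j).2)) ∧
    ∀ k, ε k = ∑' i : ℕ, if (i : ℕ∞) < l then ζ i k else 0

/-- A decomposition `ε = ζ^1 + … + ζ^l + μ` in which the `ζ^i` are proper L*-blocks whose
support intervals partition `[1, b]` and `μ` vanishes on `[0, b]` (`l, b` possibly infinite). -/
def DecompData (N : ℕ) (e : ℕ → ℕ) (ε : ℕ → ℕ) (l : ℕ∞) (ζ : ℕ → ℕ → ℕ)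
    (nb : ℕ → ℕ × ℕ) (b : ℕ∞) (μ : ℕ → ℕ) : Prop :=
  (∀ i : ℕ, (i : ℕ∞) < l → IsProperStarBlock N e (ζ i) (nb i).1 (nb i).2) ∧
  (∀ i j : ℕ, (i : ℕ∞) < l → (j : ℕ∞) < l → i ≠ j →
    Disjoint (Set.Icc (nb i).1 (nb i).2) (Set.Icc (nb j).1 (nb j).2)) ∧
  (⋃ i ∈ {i : ℕ | (i : ℕ∞) < l}, Set.Icc (nb i).1 (nb i).2) = {k : ℕ | 1 ≤ k ∧ (k : ℕ∞) ≤ b} ∧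
  (∀ k : ℕ, (k : ℕ∞) ≤ b → μ k = 0) ∧
  (∀ k, ε k = (∑' i : ℕ, if (i : ℕ∞) < l then ζ i k else 0) + μ k)

/-- Membership in `E̅*`. -/
def memEBar (N : ℕ) (e : ℕ → ℕ) (ε : ℕ → ℕ) : Prop :=
  memStar N e ε ∨
  ∃ (l : ℕ) (ζ : ℕ → ℕ → ℕ) (nb : ℕ → ℕ × ℕ) (b : ℕ),
    DecompData N e ε (l : ℕ∞) ζ nb (b : ℕ∞) (maxStarBlock N e (b + 1))

/-- Descending lexicographic order. -/
def dLT (a b : ℕ → ℕ) : Prop := ∃ k, a k < b k ∧ ∀ j, j < k → a j = b j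

def dLE (a b : ℕ → ℕ) : Prop := a = b ∨ dLT a b

/-- Ascending lexicographic order (on finitely supported functions). -/
def aLT (a b : ℕ → ℕ) : Prop := ∃ k, a k < b k ∧ ∀ j, k < j → a j = b j

/-- The basis coefficient function `β^b`. -/
def betaUnit (b : ℕ) : ℕ → ℕ := fun k => if k = b then 1 else 0

/-- The relation `η = rev̄(ε)`. -/
def RevBar (N : ℕ) (e : ℕ → ℕ) (ε η : ℕ → ℕ) : Prop :=
  (dLE (maxStarBlock N e 1) ε ∧ η = maxStarBlock N e 1) ∨
  (dLT ε (maxStarBlock N e 1) ∧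
    ((memStar N e ε ∧ η = ε) ∨
     ∃ (l : ℕ) (ζ : ℕ → ℕ → ℕ) (nb : ℕ → ℕ × ℕ) (b : ℕ) (μ : ℕ → ℕ),
       DecompData N e ε (l : ℕ∞) ζ nb (b : ℕ∞) μ ∧
       ((dLT (maxStarBlock N e (b + 1)) μ ∧
           η = fun k => (∑ i ∈ Finset.range l, ζ i k) + betaUnit b k) ∨
        (μ = maxStarBlock N e (b + 1) ∧ η = ε))))

/-- `Σ_k ε_k w^k` as a real number. -/
noncomputable def evalReal (ε : ℕ → ℕ) (w : ℝ) : ℝ := ∑' k : ℕ, (ε k : ℝ) * w ^ k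

/-- `Σ_k ε_k H_k` (finitely supported `ε`). -/
noncomputable def evalNat (ε H : ℕ → ℕ) : ℕ := ∑' k : ℕ, ε k * H k

/-- The counting function `z`. -/
noncomputable def zfun (N : ℕ) (e : ℕ → ℕ) (Ht : ℕ → ℕ) (x : ℕ) : ℕ :=
  Set.ncard {m : ℕ | m < x ∧ ∃ ε, memColl N e ε ∧ m = evalNat ε Ht}

/-- Characteristic polynomial of `L` for positive integers. -/
noncomputable def fchar (N : ℕ) (e : ℕ → ℕ) (x : ℝ) : ℝ :=
  x ^ N - (∑ k ∈ Finset.Ico 1 N, (e k : ℝ) * x ^ (N - k)) - (1 + (e N : ℝ))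

/-- Characteristic polynomial of `L` for `(0,1)`. -/
noncomputable def gchar (N : ℕ) (e : ℕ → ℕ) (x : ℝ) : ℝ :=
  -1 + (∑ k ∈ Finset.Ico 1 N, (e k : ℝ) * x ^ k) + (1 + (e N : ℝ)) * x ^ N

end Zeck

open Zeck

/-!
For a list `L` with `e₁ ≥ 1`, evaluation against its fundamental sequence is an `<_a`-order
isomorphism from its collection onto `ℕ`. A member is a stack of blocks, each bounded by the
maximal block of its top index, so whenever `ε <_a ε'` the part of `ε` below the top index `k`
where they differ evaluates below `H_k`; greedy expansion gives surjectivity. Applied to `Ẽ ⊇ E`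
and `H̃`, the numbers counted by `z(Σ μ_k H̃_k)` are the `H̃`-values of the `ε ∈ E` with
`ε <_a μ`. By the choice of `μ̌` and `μ̄` these are the `ε ∈ E` with `ε <_a μ̄`, and by the same
isomorphism for `E` and `H` there are `Σ μ̄_k H_k` of them.
-/

namespace Zeck

open Finset

variable {N : ℕ} {e H : ℕ → ℕ}

/-- The L-block at index `t` with support interval `[a, t]` and lowest digit `d`. -/
def block (N : ℕ) (e : ℕ → ℕ) (t a d : ℕ) : ℕ → ℕ :=
  fun k => if k < a then 0 else if k = a then d else maxBlock N e (t + 1) k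

lemma maxBlock_apply_zero (n : ℕ) : maxBlock N e n 0 = 0 := by
  simp [maxBlock]

lemma maxBlock_apply_of_le {n k : ℕ} (h : n ≤ k) : maxBlock N e n k = 0 :=
  if_neg (by omega)

lemma maxBlock_succ_apply_self {t : ℕ} (ht : 1 ≤ t) : maxBlock N e (t + 1) t = e 1 := by
  simp [maxBlock, ht]

lemma block_apply_of_lt {t a d k : ℕ} (h : k < a) : block N e t a d k = 0 := by
  simp [block, h]

lemma block_apply_self (t a d : ℕ) : block N e t a d a = d := by
  simp [block]

lemma block_apply_of_gt {t a d k : ℕ} (h : a < k) :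
    block N e t a d k = maxBlock N e (t + 1) k := by
  simp [block, h.not_gt, h.ne']

lemma block_one_maxBlock (t : ℕ) :
    block N e t 1 (maxBlock N e (t + 1) 1) = maxBlock N e (t + 1) := by
  funext k
  rcases lt_trichotomy k 1 with hk | rfl | hk
  · rw [block_apply_of_lt hk, Nat.lt_one_iff.1 hk, maxBlock_apply_zero]
  · exact block_apply_self _ _ _
  · exact block_apply_of_gt hk

lemma IsBlock.exists_eq_block {ζ : ℕ → ℕ} {I : Finset ℕ} (h : IsBlock N e ζ I) :
    ∃ t a d, 1 ≤ a ∧ a ≤ t ∧ d ≤ maxBlock N e (t + 1) a ∧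
      (d = maxBlock N e (t + 1) a → a = 1) ∧ ζ = block N e t a d ∧ I = Icc a t := by
  obtain ⟨n, hn, hζ⟩ := h
  obtain ⟨t, rfl⟩ : ∃ t, n = t + 1 := ⟨n - 1, by omega⟩
  rw [Nat.add_sub_cancel] at hζ
  obtain ⟨rfl, rfl⟩ | ⟨a, ⟨-, ha, hat, hgt, hlt, hlow⟩, rfl⟩ := hζ
  · exact ⟨t, 1, _, le_rfl, by omega, le_rfl, fun _ => rfl, (block_one_maxBlock t).symm, rfl⟩
  · refine ⟨t, a, ζ a, ha, hat, hlt.le, fun h => absurd h hlt.ne, ?_, rfl⟩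
    funext k
    rcases lt_trichotomy k a with hk | rfl | hk
    · rw [hlow k hk, block_apply_of_lt hk]
    · rw [block_apply_self]
    · rw [hgt k hk, block_apply_of_gt hk]

lemma isBlock_block {t a d : ℕ} (ha : 1 ≤ a) (hat : a ≤ t) (hd : d ≤ maxBlock N e (t + 1) a)
    (hmax : d = maxBlock N e (t + 1) a → a = 1) : IsBlock N e (block N e t a d) (Icc a t) := by
  refine ⟨t + 1, by omega, ?_⟩
  rw [Nat.add_sub_cancel]
  rcases hd.lt_or_eq with hd | hd
  · exact Or.inr ⟨a, ⟨by omega, ha, hat, fun j hj => block_apply_of_gt hj,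
      by rwa [block_apply_self], fun j hj => block_apply_of_lt hj⟩, rfl⟩
  · obtain rfl := hmax hd
    exact Or.inl ⟨by rw [hd, block_one_maxBlock], rfl⟩

lemma block_add_apply_of_lt {t a d j : ℕ} (ρ : ℕ → ℕ) (hj : j < a) :
    (block N e t a d + ρ) j = ρ j := by
  rw [Pi.add_apply, block_apply_of_lt hj, zero_add]

lemma block_add_apply_self {t a d : ℕ} {ρ : ℕ → ℕ} (hρ : ∀ j, a ≤ j → ρ j = 0) :
    (block N e t a d + ρ) a = d := by
  rw [Pi.add_apply, block_apply_self, hρ a le_rfl, add_zero]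

lemma block_add_apply_of_gt {t a d j : ℕ} {ρ : ℕ → ℕ} (hρ : ∀ j, a ≤ j → ρ j = 0) (hj : a < j) :
    (block N e t a d + ρ) j = maxBlock N e (t + 1) j := by
  rw [Pi.add_apply, block_apply_of_gt hj, hρ j hj.le, add_zero]

lemma sum_range_succ_eq_add_add_sum_Ioc {M : Type*} [AddCommMonoid M] (f : ℕ → M) {a t : ℕ}
    (h : a ≤ t) : ∑ k ∈ range (t + 1), f k = ∑ k ∈ range a, f k + f a + ∑ k ∈ Ioc a t, f k := by
  rw [← sum_range_add_sum_Ico f (by omega : a ≤ t + 1), sum_eq_sum_Ico_succ_bot (by omega),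
    Ico_add_one_add_one_eq_Ioc, add_assoc]

lemma sum_range_block_add {t a d : ℕ} {ρ : ℕ → ℕ} (hρ : ∀ j, a ≤ j → ρ j = 0) (hat : a ≤ t) :
    ∑ k ∈ range (t + 1), (block N e t a d + ρ) k * H k =
      ∑ k ∈ range a, ρ k * H k + d * H a + ∑ k ∈ Ioc a t, maxBlock N e (t + 1) k * H k := by
  rw [sum_range_succ_eq_add_add_sum_Ioc _ hat, block_add_apply_self hρ]
  congr 1
  · congr 1
    exact sum_congr rfl fun k hk => by rw [block_add_apply_of_lt ρ (mem_range.1 hk)]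
  · exact sum_congr rfl fun k hk => by rw [block_add_apply_of_gt hρ (mem_Ioc.1 hk).1]

lemma sum_range_lt_sum_range_of_lt_of_eq_above {ε ε' : ℕ → ℕ} {k t : ℕ} (hkt : k ≤ t)
    (hlow : ∑ j ∈ range k, ε j * H j < H k) (hlt : ε k < ε' k) (hgt : ∀ j, k < j → ε j = ε' j) :
    ∑ j ∈ range (t + 1), ε j * H j < ∑ j ∈ range (t + 1), ε' j * H j := by
  have hup : ∑ j ∈ Ioc k t, ε j * H j = ∑ j ∈ Ioc k t, ε' j * H j :=
    sum_congr rfl fun j hj => by rw [hgt j (mem_Ioc.1 hj).1]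
  rw [sum_range_succ_eq_add_add_sum_Ioc _ hkt, sum_range_succ_eq_add_add_sum_Ioc _ hkt, hup]
  have := Nat.mul_le_mul_right (H k) (Nat.succ_le_of_lt hlt)
  rw [Nat.succ_mul] at this
  omega

structure IsFundamentalSeq (N : ℕ) (e H : ℕ → ℕ) : Prop where
  apply_one : H 1 = 1
  apply_of_two_le : ∀ n, 2 ≤ n → H n = 1 + ∑ k ∈ Ico 1 n, maxBlock N e n k * H k

namespace IsFundamentalSeq

lemma apply_succ (hH : IsFundamentalSeq N e H) (t : ℕ) :
    H (t + 1) = 1 + ∑ k ∈ range (t + 1), maxBlock N e (t + 1) k * H k := by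
  rcases t with _ | t
  · simp [hH.apply_one, maxBlock_apply_zero]
  · rw [hH.apply_of_two_le _ (by omega), sum_range_eq_add_Ico _ (by omega), maxBlock_apply_zero,
      zero_mul, zero_add]

lemma pos (hH : IsFundamentalSeq N e H) {k : ℕ} (hk : 1 ≤ k) : 0 < H k := by
  obtain ⟨t, rfl⟩ := Nat.exists_eq_add_of_le' hk
  rw [hH.apply_succ]
  omega

lemma lt_apply_succ (he : 1 ≤ e 1) (hH : IsFundamentalSeq N e H) (m : ℕ) : m < H (m + 1) := by
  induction m with
  | zero => exact hH.pos le_rfl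
  | succ m ih =>
    have hle : maxBlock N e (m + 2) (m + 1) * H (m + 1) ≤
        ∑ k ∈ range (m + 2), maxBlock N e (m + 2) k * H k :=
      single_le_sum (f := fun k => maxBlock N e (m + 2) k * H k) (fun k _ => Nat.zero_le _)
        (self_mem_range_succ (m + 1))
    rw [maxBlock_succ_apply_self (by omega)] at hle
    rw [hH.apply_succ]
    nlinarith

end IsFundamentalSeq

/-- `BlockSum N e t ε`: `ε` is a sum of L-blocks with pairwise disjoint support intervals in
`[1, t]`, peeled off from the top. -/
inductive BlockSum (N : ℕ) (e : ℕ → ℕ) : ℕ → (ℕ → ℕ) → Prop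
  | zero (t : ℕ) : BlockSum N e t 0
  | cons {t a d : ℕ} {ρ : ℕ → ℕ} (ha : 1 ≤ a) (hat : a ≤ t) (hd : d ≤ maxBlock N e (t + 1) a)
      (hmax : d = maxBlock N e (t + 1) a → a = 1) (hρ : BlockSum N e (a - 1) ρ) :
      BlockSum N e t (block N e t a d + ρ)

namespace BlockSum

variable {t : ℕ} {ε ε' : ℕ → ℕ}

lemma apply_of_lt (h : BlockSum N e t ε) {k : ℕ} (hk : t < k) : ε k = 0 := by
  induction h with
  | zero => rfl
  | cons ha hat _ _ _ ih =>
    rw [Pi.add_apply, block_apply_of_gt (by omega), maxBlock_apply_of_le (by omega), ih (by omega)]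

lemma apply_zero (h : BlockSum N e t ε) : ε 0 = 0 := by
  induction h with
  | zero => rfl
  | cons ha _ _ _ _ ih => rw [Pi.add_apply, block_apply_of_lt (by omega), ih]

/-- Padding with the zero block `block N e (t + 1) (t + 1) 0` raises the top index. -/
lemma succ (he : 1 ≤ e 1) (h : BlockSum N e t ε) : BlockSum N e (t + 1) ε := by
  have hzero : block N e (t + 1) (t + 1) 0 = 0 := by
    funext k
    rcases lt_trichotomy k (t + 1) with hk | rfl | hk
    · exact block_apply_of_lt hk
    · exact block_apply_self _ _ _
    · rw [block_apply_of_gt hk, maxBlock_apply_of_le hk, Pi.zero_apply]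
  have hmax : 0 = maxBlock N e (t + 2) (t + 1) → t + 1 = 1 := by
    rw [maxBlock_succ_apply_self (by omega)]
    omega
  simpa [hzero] using cons (d := 0) (by omega) le_rfl (Nat.zero_le _) hmax (by simpa using h)

lemma mono (he : 1 ≤ e 1) (h : BlockSum N e t ε) {t' : ℕ} (htt' : t ≤ t') : BlockSum N e t' ε :=
  Nat.le_induction h (fun _ _ => succ he) t' htt'

lemma sum_range_lt (hH : IsFundamentalSeq N e H) (h : BlockSum N e t ε) :
    ∑ k ∈ range (t + 1), ε k * H k < H (t + 1) := by
  induction h with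
  | zero t => simpa using hH.pos (by omega)
  | @cons t a d ρ ha hat hd hmax hρ ih =>
    rw [Nat.sub_add_cancel ha] at ih
    rw [sum_range_block_add (fun j hj => hρ.apply_of_lt (by omega)) hat, hH.apply_succ t,
      sum_range_succ_eq_add_add_sum_Ioc _ hat]
    suffices ∑ k ∈ range a, ρ k * H k + d * H a < 1 + maxBlock N e (t + 1) a * H a by omega
    rcases hd.lt_or_eq with hd | hd
    · have := Nat.mul_le_mul_right (H a) (Nat.succ_le_of_lt hd)
      rw [Nat.succ_mul] at this
      omega
    · obtain rfl := hmax hd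
      rw [hH.apply_one] at ih
      rw [hd]
      omega

/-- The top index at which `ε <_a ε'` is the start of the top block of `ε`, unless both share
their top block. -/
lemma eq_or_lt_of_block_add_lt_block_add {t a a' d d' k : ℕ} {ρ ρ' : ℕ → ℕ} (ha : 1 ≤ a)
    (ha' : 1 ≤ a')
    (hd : d ≤ maxBlock N e (t + 1) a) (hmax : d = maxBlock N e (t + 1) a → a = 1)
    (hd' : d' ≤ maxBlock N e (t + 1) a') (hmax' : d' = maxBlock N e (t + 1) a' → a' = 1)
    (hρ : ∀ j, a ≤ j → ρ j = 0) (hρ' : ∀ j, a' ≤ j → ρ' j = 0)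
    (hlt : (block N e t a d + ρ) k < (block N e t a' d' + ρ') k)
    (hgt : ∀ j, k < j → (block N e t a d + ρ) j = (block N e t a' d' + ρ') j) :
    k = a ∨ k < a ∧ a = a' := by
  have hk : k ≤ max a a' := by
    by_contra! hk
    rw [block_add_apply_of_gt hρ (by omega), block_add_apply_of_gt hρ' (by omega)] at hlt
    exact lt_irrefl _ hlt
  have hself := block_add_apply_self (N := N) (e := e) (t := t) (d := d) hρ
  have hself' := block_add_apply_self (N := N) (e := e) (t := t) (d := d') hρ'
  rcases lt_trichotomy a a' with h | rfl | h
  · have hd'lt : d' < maxBlock N e (t + 1) a' := hd'.lt_of_ne fun h' => by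
      have := hmax' h'
      omega
    have h1 := block_add_apply_of_gt (N := N) (e := e) (t := t) (d := d) hρ h
    rcases (show k ≤ a' by omega).lt_or_eq with hk | rfl
    · have := hgt a' hk
      omega
    · omega
  · omega
  · have hdlt : d < maxBlock N e (t + 1) a := hd.lt_of_ne fun h' => by
      have := hmax h'
      omega
    have h1 := block_add_apply_of_gt (N := N) (e := e) (t := t) (d := d') hρ' h
    rcases (show k ≤ a by omega).lt_or_eq with hk | rfl
    · have := hgt a hk
      omega
    · exact Or.inl rfl

/-- Below the top index `k` at which `ε <_a ε'` the part of `ε` is itself a block stack, so it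
evaluates below `H k`. -/
lemma sum_range_lt_of_lt_of_eq_above (hH : IsFundamentalSeq N e H) (hε : BlockSum N e t ε)
    (hε' : BlockSum N e t ε') {k : ℕ} (hlt : ε k < ε' k) (hgt : ∀ j, k < j → ε j = ε' j) :
    ∑ j ∈ range k, ε j * H j < H k := by
  induction hε generalizing ε' k with
  | zero t =>
    have hk : k ≠ 0 := by
      rintro rfl
      rw [hε'.apply_zero] at hlt
      exact Nat.not_lt_zero _ hlt
    simpa using hH.pos (Nat.one_le_iff_ne_zero.2 hk)
  | @cons t a d ρ ha hat hd hmax hρ ih =>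
    cases hε' with
    | zero => exact absurd hlt (Nat.not_lt_zero _)
    | @cons _ a' d' ρ' ha' hat' hd' hmax' hρ' =>
    have hρa : ∀ j, a ≤ j → ρ j = 0 := fun j hj => hρ.apply_of_lt (by omega)
    have hρa' : ∀ j, a' ≤ j → ρ' j = 0 := fun j hj => hρ'.apply_of_lt (by omega)
    have hbelow : ∀ {k}, k ≤ a → ∑ j ∈ range k, (block N e t a d + ρ) j * H j =
        ∑ j ∈ range k, ρ j * H j := fun hk =>
      sum_congr rfl fun j hj => by rw [block_add_apply_of_lt ρ ((mem_range.1 hj).trans_le hk)]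
    rcases eq_or_lt_of_block_add_lt_block_add ha ha' hd hmax hd' hmax' hρa hρa' hlt hgt
      with rfl | ⟨hk, rfl⟩
    · rw [hbelow le_rfl]
      simpa only [Nat.sub_add_cancel ha] using hρ.sum_range_lt hH
    · rw [hbelow hk.le]
      refine ih hρ' ?_ fun j hj => ?_
      · rwa [block_add_apply_of_lt ρ hk, block_add_apply_of_lt ρ' hk] at hlt
      · rcases lt_or_ge j a with hja | hja
        · have := hgt j hj
          rwa [block_add_apply_of_lt ρ hja, block_add_apply_of_lt ρ' hja] at this
        · rw [hρa j hja, hρa' j hja]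

lemma sum_range_lt_sum_range_of_aLT (hH : IsFundamentalSeq N e H) (hε : BlockSum N e t ε)
    (hε' : BlockSum N e t ε') (h : aLT ε ε') :
    ∑ j ∈ range (t + 1), ε j * H j < ∑ j ∈ range (t + 1), ε' j * H j := by
  obtain ⟨k, hlt, hgt⟩ := h
  have hkt : k ≤ t := by
    by_contra! hk
    rw [hε'.apply_of_lt hk] at hlt
    exact Nat.not_lt_zero _ hlt
  exact sum_range_lt_sum_range_of_lt_of_eq_above hkt
    (hε.sum_range_lt_of_lt_of_eq_above hH hε' hlt hgt) hlt hgt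

end BlockSum

lemma sum_Ioc_eq_add_sum_Ioc_add_one (f : ℕ → ℕ) {b t : ℕ} (h : b < t) :
    ∑ k ∈ Ioc b t, f k = f (b + 1) + ∑ k ∈ Ioc (b + 1) t, f k := by
  rw [← insert_Ioc_add_one_left_eq_Ioc h, sum_insert left_notMem_Ioc]

lemma exists_sum_Ioc_le_lt {f : ℕ → ℕ} {t m : ℕ} (hm : m < ∑ k ∈ Ioc 0 t, f k) :
    ∃ b < t, ∑ k ∈ Ioc (b + 1) t, f k ≤ m ∧ m < f (b + 1) + ∑ k ∈ Ioc (b + 1) t, f k := by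
  have hex : ∃ a, ∑ k ∈ Ioc a t, f k ≤ m := ⟨t, by simp⟩
  obtain ⟨b, hb⟩ : ∃ b, Nat.find hex = b + 1 := by
    refine Nat.exists_eq_add_one.2 (Nat.pos_of_ne_zero fun h => ?_)
    have := Nat.find_spec hex
    rw [h] at this
    omega
  have hbt : b < t := by
    have := Nat.find_min' hex (show ∑ k ∈ Ioc t t, f k ≤ m by simp)
    omega
  refine ⟨b, hbt, hb ▸ Nat.find_spec hex, ?_⟩
  rw [← sum_Ioc_eq_add_sum_Ioc_add_one f hbt]
  exact not_le.1 (Nat.find_min hex (by omega))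

lemma exists_blockSum_sum_range_eq (hH : IsFundamentalSeq N e H) (t : ℕ) {m : ℕ}
    (hm : m < H (t + 1)) : ∃ ε, BlockSum N e t ε ∧ ∑ k ∈ range (t + 1), ε k * H k = m := by
  induction t using Nat.strong_induction_on generalizing m with
  | _ t ih =>
  have htop : H (t + 1) = 1 + ∑ k ∈ Ioc 0 t, maxBlock N e (t + 1) k * H k := by
    rw [hH.apply_succ, sum_range_succ_eq_add_add_sum_Ioc _ (Nat.zero_le t)]
    simp [maxBlock_apply_zero]
  rcases (show m ≤ ∑ k ∈ Ioc 0 t, maxBlock N e (t + 1) k * H k by omega).lt_or_eq with hm | rfl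
  · -- The top block runs down to `b + 1`; its digit there is a quotient by `H (b + 1)`, and the
    -- remainder is expanded recursively below it.
    obtain ⟨b, hbt, hlow, hhigh⟩ := exists_sum_Ioc_le_lt hm
    set T := ∑ k ∈ Ioc (b + 1) t, maxBlock N e (t + 1) k * H k
    obtain ⟨ρ, hρ, hρm⟩ := ih b hbt (Nat.mod_lt (m - T) (hH.pos (Nat.le_add_left 1 b)))
    have hd : (m - T) / H (b + 1) < maxBlock N e (t + 1) (b + 1) :=
      Nat.div_lt_of_lt_mul (by rw [mul_comm]; omega)
    refine ⟨_, BlockSum.cons (a := b + 1) (d := (m - T) / H (b + 1)) (Nat.le_add_left 1 b) hbt hd.le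
      (fun h => absurd h hd.ne) (by rwa [Nat.add_sub_cancel]), ?_⟩
    rw [sum_range_block_add (a := b + 1) (fun j hj => hρ.apply_of_lt hj) hbt, hρm]
    have := Nat.mod_add_div (m - T) (H (b + 1))
    rw [mul_comm] at this
    omega
  · rcases t.eq_zero_or_pos with rfl | ht
    · exact ⟨0, BlockSum.zero 0, by simp⟩
    · refine ⟨_, BlockSum.cons le_rfl ht le_rfl (fun _ => rfl) (BlockSum.zero 0), ?_⟩
      rw [sum_range_block_add (ρ := 0) (fun _ _ => rfl) ht, sum_Ioc_eq_add_sum_Ioc_add_one _ ht]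
      simp

lemma BlockSum.exists_blocks {t : ℕ} {ε : ℕ → ℕ} (h : BlockSum N e t ε) :
    ∃ (l : ℕ) (ζ : ℕ → ℕ → ℕ) (I : ℕ → Finset ℕ),
      (∀ i, i < l → IsBlock N e (ζ i) (I i)) ∧
      (∀ i j, i < l → j < l → i ≠ j → Disjoint (I i) (I j)) ∧
      (∀ k, ε k = ∑ i ∈ range l, ζ i k) ∧ ∀ i, i < l → I i ⊆ Icc 1 t := by
  induction h with
  | zero t => exact ⟨0, 0, fun _ => ∅, by simp, by simp, by simp, by simp⟩
  | @cons t a d ρ ha hat hd hmax _ ih =>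
    obtain ⟨l, ζ, I, hblock, hdisj, hsum, hsupp⟩ := ih
    have hnew : ∀ i, i < l → Disjoint (I i) (Icc a t) := fun i hi =>
      disjoint_left.2 fun k hk hk' => by
        have := mem_Icc.1 (hsupp i hi hk)
        have := mem_Icc.1 hk'
        omega
    refine ⟨l + 1, Function.update ζ l (block N e t a d), Function.update I l (Icc a t),
      fun i hi => ?_, fun i j hi hj hij => ?_, fun k => ?_, fun i hi => ?_⟩
    · rcases (Nat.lt_succ_iff.1 hi).lt_or_eq with hi | rfl
      · simpa [hi.ne] using hblock i hi
      · simpa using isBlock_block ha hat hd hmax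
    · rcases (Nat.lt_succ_iff.1 hi).lt_or_eq with hi | rfl <;>
        rcases (Nat.lt_succ_iff.1 hj).lt_or_eq with hj | rfl
      · simpa [hi.ne, hj.ne] using hdisj i j hi hj hij
      · simpa [hi.ne] using hnew i hi
      · simpa [hj.ne] using (hnew j hj).symm
      · exact absurd rfl hij
    · rw [sum_range_succ, Function.update_self, Pi.add_apply, hsum k, add_comm]
      congr 1
      exact sum_congr rfl fun i hi => by rw [Function.update_of_ne (mem_range.1 hi).ne]
    · rcases (Nat.lt_succ_iff.1 hi).lt_or_eq with hi | rfl
      · rw [Function.update_of_ne hi.ne]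
        exact (hsupp i hi).trans (Icc_subset_Icc_right (by omega))
      · rw [Function.update_self]
        exact Icc_subset_Icc_left ha

lemma BlockSum.memColl {t : ℕ} {ε : ℕ → ℕ} (h : BlockSum N e t ε) : memColl N e ε :=
  let ⟨l, ζ, I, hblock, hdisj, hsum, _⟩ := h.exists_blocks
  ⟨l, ζ, I, hblock, hdisj, hsum⟩

lemma blockSum_sum_of_isBlock (he : 1 ≤ e 1) {ζ : ℕ → ℕ → ℕ} {I : ℕ → Finset ℕ}
    (s : Finset ℕ) : ∀ T, (∀ i ∈ s, IsBlock N e (ζ i) (I i)) → (∀ i ∈ s, I i ⊆ Icc 1 T) →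
      (∀ i ∈ s, ∀ j ∈ s, i ≠ j → Disjoint (I i) (I j)) → BlockSum N e T (∑ i ∈ s, ζ i) := by
  induction s using Finset.induction_on_max_value (fun i => (I i).sup id) with
  | empty => exact fun T _ _ _ => BlockSum.zero T
  | insert i₀ s hi₀ hmax ih =>
    intro T hblock hsupp hdisj
    obtain ⟨t, a, d, ha, hat, hd, hdmax, hζ, hI⟩ :=
      (hblock i₀ (mem_insert_self _ _)).exists_eq_block
    have htT : t ≤ T := (mem_Icc.1 (hsupp i₀ (mem_insert_self _ _) (hI ▸ right_mem_Icc.2 hat))).2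
    have hρ : BlockSum N e (a - 1) (∑ i ∈ s, ζ i) := by
      refine ih (a - 1) (fun i hi => hblock i (mem_insert_of_mem hi)) (fun i hi k hk => ?_)
        (fun i hi j hj => hdisj i (mem_insert_of_mem hi) j (mem_insert_of_mem hj))
      have h1 := mem_Icc.1 (hsupp i (mem_insert_of_mem hi) hk)
      have h2 : k ≤ (I i).sup id := le_sup (f := id) hk
      have h3 : (I i₀).sup id ≤ t := hI ▸ Finset.sup_le fun x hx => (mem_Icc.1 hx).2
      have h4 : k ∉ I i₀ := disjoint_left.1 (hdisj i (mem_insert_of_mem hi) i₀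
        (mem_insert_self _ _) (by rintro rfl; exact hi₀ hi)) hk
      rw [hI, mem_Icc] at h4
      have := hmax i hi
      exact mem_Icc.2 ⟨h1.1, by omega⟩
    rw [sum_insert hi₀, hζ]
    exact (BlockSum.cons ha hat hd hdmax hρ).mono he htT

lemma memColl.exists_blockSum (he : 1 ≤ e 1) {ε : ℕ → ℕ} (h : memColl N e ε) :
    ∃ t, BlockSum N e t ε := by
  obtain ⟨l, ζ, I, hblock, hdisj, hsum⟩ := h
  refine ⟨(range l).sup fun i => (I i).sup id, ?_⟩
  rw [show ε = ∑ i ∈ range l, ζ i from funext fun k => by rw [hsum k, Finset.sum_apply]]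
  refine blockSum_sum_of_isBlock he _ _ (fun i hi => hblock i (mem_range.1 hi))
    (fun i hi k hk => ?_) (fun i hi j hj => hdisj i j (mem_range.1 hi) (mem_range.1 hj))
  obtain ⟨t, a, -, ha, -, -, -, -, hI⟩ := (hblock i (mem_range.1 hi)).exists_eq_block
  have h1 : a ≤ k := (mem_Icc.1 (hI ▸ hk)).1
  have h2 : k ≤ (I i).sup id := le_sup (f := id) hk
  have h3 : (I i).sup id ≤ (range l).sup fun i => (I i).sup id :=
    le_sup (f := fun i => (I i).sup id) hi
  exact mem_Icc.2 ⟨by omega, by omega⟩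

lemma evalNat_eq_sum_range {ε H : ℕ → ℕ} {t : ℕ} (h : ∀ k, t < k → ε k = 0) :
    evalNat ε H = ∑ k ∈ range (t + 1), ε k * H k := by
  refine tsum_eq_sum fun k hk => ?_
  rw [h k (by simp only [mem_range, not_lt] at hk; omega), zero_mul]

lemma aLT_irrefl (a : ℕ → ℕ) : ¬ aLT a a :=
  fun ⟨_, h, _⟩ => lt_irrefl _ h

lemma aLT_trans {a b c : ℕ → ℕ} (hab : aLT a b) (hbc : aLT b c) : aLT a c := by
  obtain ⟨k, hk, hk'⟩ := hab
  obtain ⟨l, hl, hl'⟩ := hbc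
  rcases lt_trichotomy k l with h | rfl | h
  · exact ⟨l, (hk' l h).trans_lt hl, fun j hj => (hk' j (h.trans hj)).trans (hl' j hj)⟩
  · exact ⟨k, hk.trans hl, fun j hj => (hk' j hj).trans (hl' j hj)⟩
  · exact ⟨k, hk.trans_eq (hl' k h), fun j hj => (hk' j hj).trans (hl' j (h.trans hj))⟩

lemma aLT_or_aLT_of_ne {ε ε' : ℕ → ℕ} {t : ℕ} (hε : ∀ k, t < k → ε k = 0)
    (hε' : ∀ k, t < k → ε' k = 0) (hne : ε ≠ ε') : aLT ε ε' ∨ aLT ε' ε := by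
  obtain ⟨k₀, hk₀⟩ := Function.ne_iff.1 hne
  have hk₀t : k₀ ≤ t := by
    by_contra! h
    exact hk₀ (by rw [hε _ h, hε' _ h])
  set k := Nat.findGreatest (fun k => ε k ≠ ε' k) t
  have hk : ε k ≠ ε' k := Nat.findGreatest_spec (P := fun k => ε k ≠ ε' k) hk₀t hk₀
  have hgt : ∀ j, k < j → ε j = ε' j := fun j hj => by
    rcases le_or_gt j t with hjt | hjt
    · exact not_not.1 (Nat.findGreatest_is_greatest hj hjt)
    · rw [hε j hjt, hε' j hjt]
  rcases hk.lt_or_gt with h | h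
  · exact Or.inl ⟨k, h, hgt⟩
  · exact Or.inr ⟨k, h, fun j hj => (hgt j hj).symm⟩

lemma memColl_zero : memColl N e 0 :=
  (BlockSum.zero 0).memColl

namespace memColl

variable {ε ε' μ : ℕ → ℕ}

lemma aLT_or_aLT_of_ne (he : 1 ≤ e 1) (hε : memColl N e ε) (hε' : memColl N e ε')
    (hne : ε ≠ ε') : aLT ε ε' ∨ aLT ε' ε := by
  obtain ⟨t, ht⟩ := hε.exists_blockSum he
  obtain ⟨t', ht'⟩ := hε'.exists_blockSum he
  exact Zeck.aLT_or_aLT_of_ne (t := max t t') (fun k hk => ht.apply_of_lt (by omega))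
    (fun k hk => ht'.apply_of_lt (by omega)) hne

lemma zero_aLT (he : 1 ≤ e 1) (hμ : memColl N e μ) (hne : μ ≠ 0) : aLT 0 μ :=
  (memColl_zero.aLT_or_aLT_of_ne he hμ hne.symm).resolve_right
    fun ⟨_, hk, _⟩ => Nat.not_lt_zero _ hk

lemma evalNat_lt_evalNat (he : 1 ≤ e 1) (hH : IsFundamentalSeq N e H) (hε : memColl N e ε)
    (hε' : memColl N e ε') (h : aLT ε ε') : evalNat ε H < evalNat ε' H := by
  obtain ⟨t, ht⟩ := hε.exists_blockSum he
  obtain ⟨t', ht'⟩ := hε'.exists_blockSum he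
  have hs := ht.mono he (le_max_left t t')
  have hs' := ht'.mono he (le_max_right t t')
  rw [evalNat_eq_sum_range fun k hk => hs.apply_of_lt hk,
    evalNat_eq_sum_range fun k hk => hs'.apply_of_lt hk]
  exact hs.sum_range_lt_sum_range_of_aLT hH hs' h

lemma evalNat_lt_evalNat_iff (he : 1 ≤ e 1) (hH : IsFundamentalSeq N e H)
    (hε : memColl N e ε) (hε' : memColl N e ε') : evalNat ε H < evalNat ε' H ↔ aLT ε ε' := by
  refine ⟨fun hlt => ?_, hε.evalNat_lt_evalNat he hH hε'⟩
  rcases eq_or_ne ε ε' with rfl | hne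
  · exact absurd hlt (lt_irrefl _)
  · exact (hε.aLT_or_aLT_of_ne he hε' hne).resolve_right
      fun h => (hε'.evalNat_lt_evalNat he hH hε h).not_gt hlt

end memColl

lemma exists_memColl_evalNat_eq (he : 1 ≤ e 1) (hH : IsFundamentalSeq N e H) (m : ℕ) :
    ∃ ε, memColl N e ε ∧ evalNat ε H = m := by
  obtain ⟨ε, hε, hm⟩ := exists_blockSum_sum_range_eq hH m (hH.lt_apply_succ he m)
  exact ⟨ε, hε.memColl, by rw [evalNat_eq_sum_range fun k hk => hε.apply_of_lt hk, hm]⟩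

lemma injOn_evalNat (he : 1 ≤ e 1) (hH : IsFundamentalSeq N e H) :
    Set.InjOn (evalNat · H) {ε | memColl N e ε} := by
  intro ε hε ε' hε' heq
  by_contra hne
  rcases memColl.aLT_or_aLT_of_ne he hε hε' hne with h | h
  · exact (memColl.evalNat_lt_evalNat he hH hε hε' h).ne heq
  · exact (memColl.evalNat_lt_evalNat he hH hε' hε h).ne heq.symm

lemma image_evalNat_setOf_aLT (he : 1 ≤ e 1) (hH : IsFundamentalSeq N e H) {μ : ℕ → ℕ}
    (hμ : memColl N e μ) :
    (evalNat · H) '' {ε | memColl N e ε ∧ aLT ε μ} = Set.Iio (evalNat μ H) := by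
  ext m
  constructor
  · rintro ⟨ε, ⟨hε, hlt⟩, rfl⟩
    exact (hε.evalNat_lt_evalNat_iff he hH hμ).2 hlt
  · intro hm
    obtain ⟨ε, hε, rfl⟩ := exists_memColl_evalNat_eq he hH m
    exact ⟨ε, ⟨hε, (hε.evalNat_lt_evalNat_iff he hH hμ).1 hm⟩, rfl⟩

lemma finite_setOf_aLT (he : 1 ≤ e 1) (hH : IsFundamentalSeq N e H) {μ : ℕ → ℕ}
    (hμ : memColl N e μ) : {ε | memColl N e ε ∧ aLT ε μ}.Finite := by
  refine Set.Finite.of_finite_image ?_ ((injOn_evalNat he hH).mono fun ε hε => hε.1)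
  rw [image_evalNat_setOf_aLT he hH hμ]
  exact Set.finite_Iio _

lemma ncard_setOf_aLT (he : 1 ≤ e 1) (hH : IsFundamentalSeq N e H) {μ : ℕ → ℕ}
    (hμ : memColl N e μ) : {ε | memColl N e ε ∧ aLT ε μ}.ncard = evalNat μ H := by
  rw [← ((injOn_evalNat he hH).mono fun ε hε => hε.1).ncard_image,
    image_evalNat_setOf_aLT he hH hμ, Set.ncard_Iio_nat]

lemma zfun_evalNat_eq_ncard {M : ℕ} {et Ht : ℕ → ℕ} (het : 1 ≤ et 1)
    (hHt : IsFundamentalSeq M et Ht) (hsub : ∀ ε, memColl N e ε → memColl M et ε)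
    {μ : ℕ → ℕ} (hμ : memColl M et μ) :
    zfun N e Ht (evalNat μ Ht) = {ε | memColl N e ε ∧ aLT ε μ}.ncard := by
  have himage : {m | m < evalNat μ Ht ∧ ∃ ε, memColl N e ε ∧ m = evalNat ε Ht} =
      (evalNat · Ht) '' {ε | memColl N e ε ∧ aLT ε μ} := by
    ext m
    constructor
    · rintro ⟨hm, ε, hε, rfl⟩
      exact ⟨ε, ⟨hε, ((hsub ε hε).evalNat_lt_evalNat_iff het hHt hμ).1 hm⟩, rfl⟩
    · rintro ⟨ε, ⟨hε, hlt⟩, rfl⟩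
      exact ⟨((hsub ε hε).evalNat_lt_evalNat_iff het hHt hμ).2 hlt, ε, hε, rfl⟩
  rw [zfun, himage, ((injOn_evalNat het hHt).mono fun ε hε => hsub ε hε.1).ncard_image]

lemma setOf_aLT_eq_of_isSucc (he : 1 ≤ e 1) {μ μc μb : ℕ → ℕ}
    (hc : μc ∈ {ε | memColl N e ε ∧ aLT ε μ})
    (hc_max : ∀ ε ∈ {ε | memColl N e ε ∧ aLT ε μ}, ε ≠ μc → aLT ε μc)
    (hb : memColl N e μb) (hcb : aLT μc μb)
    (hb_min : ∀ ε, memColl N e ε → aLT μc ε → ε ≠ μb → aLT μb ε) :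
    {ε | memColl N e ε ∧ aLT ε μ} = {ε | memColl N e ε ∧ aLT ε μb} := by
  ext ε
  constructor
  · rintro ⟨hε, hlt⟩
    refine ⟨hε, ?_⟩
    rcases eq_or_ne ε μc with rfl | hne
    · exact hcb
    · exact aLT_trans (hc_max ε ⟨hε, hlt⟩ hne) hcb
  · rintro ⟨hε, hlt⟩
    refine ⟨hε, ?_⟩
    rcases eq_or_ne ε μc with rfl | hne
    · exact hc.2
    rcases hε.aLT_or_aLT_of_ne he hc.1 hne with h | h
    · exact aLT_trans h hc.2
    rcases eq_or_ne ε μb with rfl | hne'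
    · exact absurd hlt (aLT_irrefl _)
    · exact absurd (aLT_trans hlt (hb_min ε hε h hne')) (aLT_irrefl _)

end Zeck

theorem duality_formula_general (N M : ℕ) (e et : ℕ → ℕ)
    (he : 1 ≤ e 1) (het : 1 ≤ et 1)
    (hsub : {μ | memColl N e μ} ⊂ {μ | memColl M et μ})
    (H Ht : ℕ → ℕ) (hH1 : H 1 = 1)
    (hHrec : ∀ n, 2 ≤ n → H n = 1 + ∑ k ∈ Finset.Ico 1 n, maxBlock N e n k * H k)
    (hHt1 : Ht 1 = 1)
    (hHtrec : ∀ n, 2 ≤ n → Ht n = 1 + ∑ k ∈ Finset.Ico 1 n, maxBlock M et n k * Ht k)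
    (μ : ℕ → ℕ) (hμ : memColl M et μ) (hμne : μ ≠ 0) :
    {ε | memColl N e ε ∧ aLT ε μ}.Finite ∧
    {ε | memColl N e ε ∧ aLT ε μ}.Nonempty ∧
    ∀ μcheck μbar : ℕ → ℕ,
      (μcheck ∈ {ε | memColl N e ε ∧ aLT ε μ} ∧
        ∀ ε ∈ {ε | memColl N e ε ∧ aLT ε μ}, ε ≠ μcheck → aLT ε μcheck) →
      (memColl N e μbar ∧ aLT μcheck μbar ∧
        ∀ ε, memColl N e ε → aLT μcheck ε → ε ≠ μbar → aLT μbar ε) →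
      zfun N e Ht (evalNat μ Ht) = evalNat μbar H := by
  have hH : IsFundamentalSeq N e H := ⟨hH1, hHrec⟩
  have hHt : IsFundamentalSeq M et Ht := ⟨hHt1, hHtrec⟩
  have hE : ∀ ε, memColl N e ε → memColl M et ε := fun ε hε => hsub.subset hε
  refine ⟨(finite_setOf_aLT het hHt hμ).subset fun ε hε => ⟨hE ε hε.1, hε.2⟩,
    ⟨0, memColl_zero, hμ.zero_aLT het hμne⟩, ?_⟩
  rintro μcheck μbar ⟨hcheck, hcheck_max⟩ ⟨hbar, hcheck_bar, hbar_min⟩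
  rw [zfun_evalNat_eq_ncard het hHt hE hμ,
    setOf_aLT_eq_of_isSucc he hcheck hcheck_max hbar hcheck_bar hbar_min,
    ncard_setOf_aLT he hH hbar]

/-- Duality formula: for nonzero `μ ∈ Ẽ`, the set `{ε ∈ E : ε <_a μ}` is finite and
nonempty; if `μ̌` is its largest element and `μ̄` the smallest element of `E` above `μ̌`,
then `z(Σ μ_k H̃_k) = Σ μ̄_k H_k`. -/
theorem duality_formula (N M : ℕ) (e et : ℕ → ℕ)
    (hN : 2 ≤ N) (hM : 2 ≤ M) (he : 1 ≤ e 1) (het : 1 ≤ et 1)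
    (hsub : {μ | memColl N e μ} ⊂ {μ | memColl M et μ})
    (H Ht : ℕ → ℕ) (hH1 : H 1 = 1)
    (hHrec : ∀ n, 2 ≤ n → H n = 1 + ∑ k ∈ Finset.Ico 1 n, maxBlock N e n k * H k)
    (hHt1 : Ht 1 = 1)
    (hHtrec : ∀ n, 2 ≤ n → Ht n = 1 + ∑ k ∈ Finset.Ico 1 n, maxBlock M et n k * Ht k)
    (μ : ℕ → ℕ) (hμ : memColl M et μ) (hμne : μ ≠ 0) :
    {ε | memColl N e ε ∧ aLT ε μ}.Finite ∧
    {ε | memColl N e ε ∧ aLT ε μ}.Nonempty ∧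
    ∀ μcheck μbar : ℕ → ℕ,
      (μcheck ∈ {ε | memColl N e ε ∧ aLT ε μ} ∧
        ∀ ε ∈ {ε | memColl N e ε ∧ aLT ε μ}, ε ≠ μcheck → aLT ε μcheck) →
      (memColl N e μbar ∧ aLT μcheck μbar ∧
        ∀ ε, memColl N e ε → aLT μcheck ε → ε ≠ μbar → aLT μbar ε) →
      zfun N e Ht (evalNat μ Ht) = evalNat μbar H :=
  duality_formula_general N M e et he het hsub H Ht hH1 hHrec hHt1 hHtrec μ hμ hμne
end

section
/- Assume the context (collections E*, Ẽ* for (0,1) determined by L and L̃ with E ⊊ Ẽ). For every ε ∈ Ẽ* there is a unique maximal ℓ ∈ {0, 1, 2, …} ∪ {∞} such that ε = ζ^1 + … + ζ^ℓ + μ where ζ^1, …, ζ^ℓ are proper L*-blocks whose support intervals partition the interval [1, b] for some b (b = 0 when ℓ = 0) and μ_k = 0 for all k ≤ b; moreover, for this maximal ℓ one has β̄^{b+1} ≤_d μ, and if ℓ = ∞ then μ = 0 and ε ∈ E*. -/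
open Filter Topology

open Zeck


section Aux

variable {N : ℕ} {e : ℕ → ℕ}

lemma maxStarBlock_of_lt {n k : ℕ} (h : k < n) : maxStarBlock N e n k = 0 := by
  simp [maxStarBlock, Nat.not_le.2 h]

lemma le_of_maxStarBlock_pos {n k : ℕ} (h : 0 < maxStarBlock N e n k) : n ≤ k := by
  by_contra hk
  rw [maxStarBlock_of_lt (Nat.not_le.1 hk)] at h
  exact absurd h (lt_irrefl 0)

lemma block_support {ζ : ℕ → ℕ} {n b k : ℕ} (hb : IsProperStarBlock N e ζ n b)
    (hk : k ∉ Set.Icc n b) : ζ k = 0 := by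
  obtain ⟨hn, hnb, hlt, _, hgt⟩ := hb
  rw [Set.mem_Icc] at hk
  push_neg at hk
  rcases Nat.lt_or_ge k n with h | h
  · rw [hlt k (lt_of_lt_of_le h hnb), maxStarBlock_of_lt h]
  · exact hgt k (hk h)

/-- The next greedy block endpoint relation. -/
def Next (N : ℕ) (e : ℕ → ℕ) (ε : ℕ → ℕ) (a b : ℕ) : Prop :=
  1 ≤ a ∧ a ≤ b ∧ (∀ j, a ≤ j → j < b → ε j = maxStarBlock N e a j) ∧
    ε b < maxStarBlock N e a b

inductive ChainTo (N : ℕ) (e : ℕ → ℕ) (ε : ℕ → ℕ) : ℕ → ℕ → Prop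
  | zero : ChainTo N e ε 0 0
  | succ {m c c'} : ChainTo N e ε m c → Next N e ε (c + 1) c' → ChainTo N e ε (m + 1) c'

lemma next_functional {ε : ℕ → ℕ} {a b b' : ℕ} (h : Next N e ε a b) (h' : Next N e ε a b') :
    b = b' := by
  by_contra hne
  rcases Nat.lt_or_ge b b' with hlt | hge
  · exact (ne_of_lt h.2.2.2) (h'.2.2.1 b h.2.1 hlt)
  · exact (ne_of_lt h'.2.2.2) (h.2.2.1 b' h'.2.1 (lt_of_le_of_ne hge (Ne.symm hne)))

lemma chainTo_functional {ε : ℕ → ℕ} {m c c' : ℕ} (h : ChainTo N e ε m c)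
    (h' : ChainTo N e ε m c') : c = c' := by
  induction h generalizing c' with
  | zero => cases h'; rfl
  | @succ m c1 c2 hm hn ih =>
    cases h' with
    | @succ _ c3 _ hm' hn' =>
      have h3 : c1 = c3 := ih hm'
      subst h3
      exact next_functional hn hn'

lemma chainTo_prefix {ε : ℕ → ℕ} {m c : ℕ} (h : ChainTo N e ε m c) :
    ∀ k, k ≤ m → ∃ c', ChainTo N e ε k c' := by
  induction h with
  | zero => intro k hk; exact ⟨0, by rw [Nat.le_zero.1 hk]; exact ChainTo.zero⟩
  | @succ m c1 c2 hm hn ih =>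
    intro k hk
    rcases Nat.lt_or_ge k (m + 1) with h1 | h1
    · exact ih k (by omega)
    · have hk' : k = m + 1 := by omega
      exact ⟨c2, hk' ▸ ChainTo.succ hm hn⟩

lemma chainTo_fun {ε : ℕ → ℕ} {m c : ℕ} (h : ChainTo N e ε m c) :
    ∃ g : ℕ → ℕ, g 0 = 0 ∧ g m = c ∧ ∀ t, t < m → Next N e ε (g t + 1) (g (t + 1)) := by
  induction h with
  | zero => exact ⟨fun _ => 0, rfl, rfl, fun t ht => absurd ht (Nat.not_lt_zero t)⟩
  | @succ m c1 c2 hm hn ih =>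
    obtain ⟨g, hg0, hgm, hgnext⟩ := ih
    refine ⟨Function.update g (m + 1) c2, ?_, ?_, ?_⟩
    · rw [Function.update_of_ne (by omega)]; exact hg0
    · rw [Function.update_self]
    · intro t ht
      rcases Nat.lt_or_ge t m with h1 | h1
      · rw [Function.update_of_ne (by omega), Function.update_of_ne (by omega)]
        exact hgnext t h1
      · have ht' : t = m := by omega
        subst ht'
        rw [Function.update_of_ne (by omega), Function.update_self, hgm]
        exact hn

lemma g_mono {g : ℕ → ℕ} {m : ℕ} (h : ∀ t, t < m → g t < g (t + 1)) :
    ∀ {s t : ℕ}, s ≤ t → t ≤ m → g s ≤ g t := by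
  intro s t hst htm
  induction t with
  | zero =>
    have hs : s = 0 := by omega
    subst hs; exact le_refl _
  | succ n ih =>
    rcases Nat.lt_or_ge s (n + 1) with h1 | h2
    · have h3 : g s ≤ g n := ih (by omega) (by omega)
      have h4 := h n (by omega)
      omega
    · have hs : s = n + 1 := by omega
      subst hs; exact le_refl _

lemma g_cover {g : ℕ → ℕ} (hg0 : g 0 = 0) :
    ∀ m, (∀ t, t < m → g t < g (t + 1)) → ∀ k, 1 ≤ k → k ≤ g m →
      ∃ t, t < m ∧ g t < k ∧ k ≤ g (t + 1) := by
  intro m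
  induction m with
  | zero => intro _ k hk1 hk2; rw [hg0] at hk2; omega
  | succ n ih =>
    intro h k hk1 hk2
    rcases le_or_gt k (g n) with h1 | h1
    · obtain ⟨t, ht, h2⟩ := ih (fun t ht => h t (by omega)) k hk1 h1
      exact ⟨t, by omega, h2⟩
    · exact ⟨n, by omega, h1, hk2⟩

lemma tsum_ite_range (n : ℕ) (f : ℕ → ℕ) :
    (∑' i : ℕ, if (i : ℕ∞) < (n : ℕ∞) then f i else 0) = ∑ i ∈ Finset.range n, f i := by
  rw [tsum_eq_sum (s := Finset.range n)
    (fun i hi => if_neg (by rw [Nat.cast_lt]; exact fun h => hi (Finset.mem_range.2 h)))]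
  exact Finset.sum_congr rfl fun i hi => if_pos (Nat.cast_lt.2 (Finset.mem_range.1 hi))

lemma memStar_apply_zero {M : ℕ} {et : ℕ → ℕ} {ε : ℕ → ℕ} (h : memStar M et ε) : ε 0 = 0 := by
  obtain ⟨-, l, ζ, nb, hblocks, -, hsum⟩ := h
  rw [hsum 0]
  have hz : ∀ i : ℕ, (if ((i : ℕ) : ℕ∞) < l then ζ i 0 else 0) = 0 := by
    intro i
    by_cases hi : ((i : ℕ) : ℕ∞) < l
    · rw [if_pos hi]
      refine block_support (hblocks i hi) ?_
      intro hmem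
      rw [Set.mem_Icc] at hmem
      have := (hblocks i hi).1
      omega
    · rw [if_neg hi]
  rw [tsum_congr hz, tsum_zero]

lemma chainTo_decomp {ε : ℕ → ℕ} (hε0 : ε 0 = 0) {m c : ℕ} (h : ChainTo N e ε m c) :
    ∃ ζ nb μ, DecompData N e ε (m : ℕ∞) ζ nb (c : ℕ∞) μ := by
  obtain ⟨g, hg0, hgm, hgnext⟩ := chainTo_fun h
  have hstep : ∀ t, t < m → g t < g (t + 1) := fun t ht => by
    have := (hgnext t ht).2.1; omega
  refine ⟨fun t k => if g t + 1 ≤ k ∧ k ≤ g (t + 1) then ε k else 0,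
    fun t => (g t + 1, g (t + 1)), fun k => if k ≤ c then 0 else ε k, ?_, ?_, ?_, ?_, ?_⟩ <;>
    dsimp only
  · intro i hi
    rw [Nat.cast_lt] at hi
    obtain ⟨h1, h2, h3, h4⟩ := hgnext i hi
    refine ⟨by omega, h2, ?_, ?_, ?_⟩
    · intro j hj
      beta_reduce
      by_cases hcase : g i + 1 ≤ j
      · rw [if_pos ⟨hcase, by omega⟩]
        exact h3 j hcase hj
      · rw [if_neg (by omega), maxStarBlock_of_lt (show j < g i + 1 by omega)]
    · beta_reduce; rw [if_pos ⟨h2, le_refl _⟩]; exact h4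
    · intro j hj; beta_reduce; rw [if_neg (by omega)]
  · have key : ∀ i j : ℕ, i < m → j < m → i < j →
        Disjoint (Set.Icc (g i + 1) (g (i + 1))) (Set.Icc (g j + 1) (g (j + 1))) := by
      intro i j him hjm hij
      have hle : g (i + 1) ≤ g j := g_mono hstep (by omega) (by omega)
      rw [Set.disjoint_left]
      intro x hx hx'
      rw [Set.mem_Icc] at hx hx'
      omega
    intro i j hi hj hne
    rw [Nat.cast_lt] at hi hj
    rcases Nat.lt_or_ge i j with h1 | h1
    · exact key i j hi hj h1
    · exact (key j i hj hi (by omega)).symm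
  · ext k
    simp only [Set.mem_iUnion, Set.mem_setOf_eq, Set.mem_Icc, Nat.cast_lt, Nat.cast_le]
    constructor
    · rintro ⟨t, ht, h1, h2⟩
      have h3 : g (t + 1) ≤ g m := g_mono hstep (by omega) (le_refl m)
      omega
    · rintro ⟨hk1, hk2⟩
      obtain ⟨t, ht, h1, h2⟩ := g_cover hg0 m hstep k hk1 (by omega)
      exact ⟨t, ht, by omega, h2⟩
  · intro k hk
    rw [Nat.cast_le] at hk
    exact if_pos hk
  · intro k
    by_cases hcov : 1 ≤ k ∧ k ≤ c
    · obtain ⟨t0, ht0, h1, h2⟩ := g_cover hg0 m hstep k hcov.1 (by omega)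
      have hother : ∀ t : ℕ, t ≠ t0 →
          (if ((t : ℕ) : ℕ∞) < (m : ℕ∞) then
            (if g t + 1 ≤ k ∧ k ≤ g (t + 1) then ε k else 0) else 0) = 0 := by
        intro t ht
        by_cases htm : ((t : ℕ) : ℕ∞) < (m : ℕ∞)
        · rw [if_pos htm]
          rw [Nat.cast_lt] at htm
          have hneg : ¬(g t + 1 ≤ k ∧ k ≤ g (t + 1)) := by
            rintro ⟨ha, hb⟩
            rcases Nat.lt_or_ge t t0 with hlt | hge
            · have h5 : g (t + 1) ≤ g t0 := g_mono hstep (by omega) (by omega)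
              omega
            · have h5 : g (t0 + 1) ≤ g t := g_mono hstep (by omega) (by omega)
              omega
          rw [if_neg hneg]
        · rw [if_neg htm]
      rw [tsum_eq_single t0 hother, if_pos (Nat.cast_lt.2 ht0),
        if_pos (show g t0 + 1 ≤ k ∧ k ≤ g (t0 + 1) from ⟨by omega, h2⟩), if_pos hcov.2]
      omega
    · have hall : ∀ t : ℕ,
          (if ((t : ℕ) : ℕ∞) < (m : ℕ∞) then
            (if g t + 1 ≤ k ∧ k ≤ g (t + 1) then ε k else 0) else 0) = 0 := by
        intro t
        by_cases htm : ((t : ℕ) : ℕ∞) < (m : ℕ∞)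
        · rw [if_pos htm]
          rw [Nat.cast_lt] at htm
          have hneg : ¬(g t + 1 ≤ k ∧ k ≤ g (t + 1)) := by
            rintro ⟨ha, hb⟩
            have h5 : g (t + 1) ≤ g m := g_mono hstep (by omega) (le_refl m)
            omega
          rw [if_neg hneg]
        · rw [if_neg htm]
      rw [tsum_congr hall, tsum_zero]
      rcases Nat.eq_zero_or_pos k with rfl | hk1
      · rw [hε0, if_pos (Nat.zero_le c)]
      · rw [if_neg (by omega)]
        omega

lemma chainAll_decomp {ε : ℕ → ℕ} (hε0 : ε 0 = 0) (h : ∀ m, ∃ c, ChainTo N e ε m c) :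
    ∃ ζ nb, DecompData N e ε ⊤ ζ nb ⊤ (fun _ => 0) := by
  choose g hg using h
  have hg0 : g 0 = 0 := chainTo_functional (hg 0) ChainTo.zero
  have hnext : ∀ m, Next N e ε (g m + 1) (g (m + 1)) := by
    intro m
    cases hg (m + 1) with
    | succ hm hn =>
      rw [chainTo_functional (hg m) hm]
      exact hn
  have hstep : ∀ t (_ : True), g t < g (t + 1) := fun t _ => by
    have := (hnext t).2.1; omega
  have hmono : ∀ {s t : ℕ}, s ≤ t → g s ≤ g t := by
    intro s t hst
    exact g_mono (m := t) (fun u _ => hstep u trivial) hst (le_refl t)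
  have hge : ∀ tk : ℕ, tk ≤ g tk := by
    intro tk
    induction tk with
    | zero => omega
    | succ n ih => have := hstep n trivial; omega
  refine ⟨fun t k => if g t + 1 ≤ k ∧ k ≤ g (t + 1) then ε k else 0,
    fun t => (g t + 1, g (t + 1)), ?_, ?_, ?_, ?_, ?_⟩ <;> dsimp only
  · intro i _
    obtain ⟨h1, h2, h3, h4⟩ := hnext i
    refine ⟨by omega, h2, ?_, ?_, ?_⟩
    · intro j hj
      beta_reduce
      by_cases hcase : g i + 1 ≤ j
      · rw [if_pos ⟨hcase, by omega⟩]
        exact h3 j hcase hj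
      · rw [if_neg (by omega), maxStarBlock_of_lt (show j < g i + 1 by omega)]
    · beta_reduce; rw [if_pos ⟨h2, le_refl _⟩]; exact h4
    · intro j hj; beta_reduce; rw [if_neg (by omega)]
  · have key : ∀ i j : ℕ, i < j →
        Disjoint (Set.Icc (g i + 1) (g (i + 1))) (Set.Icc (g j + 1) (g (j + 1))) := by
      intro i j hij
      have hle : g (i + 1) ≤ g j := hmono (by omega)
      rw [Set.disjoint_left]
      intro x hx hx'
      rw [Set.mem_Icc] at hx hx'
      omega
    intro i j _ _ hne
    rcases Nat.lt_or_ge i j with h1 | h1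
    · exact key i j h1
    · exact (key j i (by omega)).symm
  · ext k
    simp only [Set.mem_iUnion, Set.mem_setOf_eq, Set.mem_Icc]
    constructor
    · rintro ⟨t, ht, h1, h2⟩
      exact ⟨by omega, le_top⟩
    · rintro ⟨hk1, -⟩
      obtain ⟨t, ht, h1, h2⟩ := g_cover hg0 k (fun t _ => hstep t trivial) k hk1 (hge k)
      exact ⟨t, ENat.coe_lt_top t, by omega, h2⟩
  · intro k _; rfl
  · intro k
    rcases Nat.eq_zero_or_pos k with rfl | hk1
    · have hall : ∀ t : ℕ,
          (if ((t : ℕ) : ℕ∞) < (⊤ : ℕ∞) then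
            (if g t + 1 ≤ 0 ∧ 0 ≤ g (t + 1) then ε 0 else 0) else 0) = 0 := by
        intro t
        rw [if_pos (ENat.coe_lt_top t), if_neg (by omega)]
      rw [tsum_congr hall, tsum_zero, hε0]
    · obtain ⟨t0, ht0, h1, h2⟩ := g_cover hg0 k (fun t _ => hstep t trivial) k hk1 (hge k)
      have hother : ∀ t : ℕ, t ≠ t0 →
          (if ((t : ℕ) : ℕ∞) < (⊤ : ℕ∞) then
            (if g t + 1 ≤ k ∧ k ≤ g (t + 1) then ε k else 0) else 0) = 0 := by
        intro t ht
        rw [if_pos (ENat.coe_lt_top t)]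
        have hneg : ¬(g t + 1 ≤ k ∧ k ≤ g (t + 1)) := by
          rintro ⟨ha, hb⟩
          rcases Nat.lt_or_ge t t0 with hlt | hge'
          · have h5 : g (t + 1) ≤ g t0 := hmono (by omega)
            omega
          · have h5 : g (t0 + 1) ≤ g t := hmono (by omega)
            omega
        rw [if_neg hneg]
      rw [tsum_eq_single t0 hother, if_pos (ENat.coe_lt_top t0),
        if_pos (show g t0 + 1 ≤ k ∧ k ≤ g (t0 + 1) from ⟨by omega, h2⟩)]
      omega

lemma decomp_chain {ε : ℕ → ℕ} {l : ℕ∞} {ζ : ℕ → ℕ → ℕ} {nb : ℕ → ℕ × ℕ} {b : ℕ∞} {μ : ℕ → ℕ}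
    (D : DecompData N e ε l ζ nb b μ) :
    ∀ m : ℕ, (m : ℕ∞) ≤ l → ∃ c, ChainTo N e ε m c := by
  obtain ⟨hblocks, hdisj, hunion, hμ, hsum⟩ := D
  have hsupp : ∀ i : ℕ, (i : ℕ∞) < l → ∀ k, k ∉ Set.Icc (nb i).1 (nb i).2 → ζ i k = 0 :=
    fun i hi k hk => block_support (hblocks i hi) hk
  have hIsub : ∀ i : ℕ, (i : ℕ∞) < l →
      Set.Icc (nb i).1 (nb i).2 ⊆ {k : ℕ | 1 ≤ k ∧ (k : ℕ∞) ≤ b} := by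
    intro i hi x hx
    rw [← hunion]
    exact Set.mem_biUnion hi hx
  have hval : ∀ i : ℕ, (i : ℕ∞) < l → ∀ k, k ∈ Set.Icc (nb i).1 (nb i).2 → ε k = ζ i k := by
    intro i hi k hk
    have hkb : (k : ℕ∞) ≤ b := (hIsub i hi hk).2
    have hother : ∀ j : ℕ, j ≠ i → (if ((j : ℕ) : ℕ∞) < l then ζ j k else 0) = 0 := by
      intro j hj
      by_cases hjl : ((j : ℕ) : ℕ∞) < l
      · rw [if_pos hjl]
        exact hsupp j hjl k (Set.disjoint_right.1 (hdisj j i hjl hi hj) hk)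
      · rw [if_neg hjl]
    rw [hsum k, hμ k hkb, add_zero, tsum_eq_single i hother, if_pos hi]
  have main : ∀ m : ℕ, (m : ℕ∞) ≤ l →
      ∃ (c : ℕ) (σ : ℕ → ℕ), ChainTo N e ε m c ∧
        (∀ t, t < m → ((σ t : ℕ) : ℕ∞) < l) ∧
        (∀ t t', t < m → t' < m → σ t = σ t' → t = t') ∧
        (⋃ t ∈ Finset.range m, Set.Icc (nb (σ t)).1 (nb (σ t)).2) = Set.Icc 1 c := by
    intro m
    induction m with
    | zero =>
      intro _
      refine ⟨0, id, ChainTo.zero, by omega, by omega, ?_⟩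
      rw [Finset.range_zero]
      simp only [Finset.notMem_empty, Set.iUnion_of_empty, Set.iUnion_empty]
      exact (Set.Icc_eq_empty (by omega)).symm
    | succ m ih =>
      intro hm1
      have hmlt : (m : ℕ∞) < l := by
        refine lt_of_lt_of_le ?_ hm1
        exact_mod_cast Nat.lt_succ_self m
      obtain ⟨c, σ, hchain, hσl, hσinj, hσu⟩ := ih (le_of_lt hmlt)
      have hIσsub : ∀ t, t < m → Set.Icc (nb (σ t)).1 (nb (σ t)).2 ⊆ Set.Icc 1 c := by
        intro t ht x hx
        rw [← hσu]
        exact Set.mem_biUnion (Finset.mem_range.2 ht) hx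
      have hc1b : ((c + 1 : ℕ) : ℕ∞) ≤ b := by
        by_contra hb
        have hcover : ∀ i : ℕ, (i : ℕ∞) < l → ∃ t, t < m ∧ σ t = i := by
          intro i hi
          have hn1 : (nb i).1 ∈ Set.Icc (nb i).1 (nb i).2 :=
            Set.mem_Icc.2 ⟨le_refl _, (hblocks i hi).2.1⟩
          have hmem := hIsub i hi hn1
          have hmem2 : (nb i).1 ∈ Set.Icc 1 c := by
            rw [Set.mem_setOf_eq] at hmem
            rw [Set.mem_Icc]
            refine ⟨hmem.1, ?_⟩
            by_contra hgt
            have h6 : ((c + 1 : ℕ) : ℕ∞) ≤ ((nb i).1 : ℕ∞) :=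
              Nat.cast_le.2 (by omega)
            exact hb (le_trans h6 hmem.2)
          rw [← hσu] at hmem2
          simp only [Set.mem_iUnion, Finset.mem_range] at hmem2
          obtain ⟨t, ht, hmem3⟩ := hmem2
          refine ⟨t, ht, ?_⟩
          by_contra hne
          exact Set.disjoint_left.1 (hdisj (σ t) i (hσl t ht) hi hne) hmem3 hn1
        have hsubset : Finset.range (m + 1) ⊆ Finset.image σ (Finset.range m) := by
          intro i hi
          rw [Finset.mem_range] at hi
          have hil : (i : ℕ∞) < l := lt_of_le_of_lt (Nat.cast_le.2 (by omega)) hmlt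
          obtain ⟨t, ht, hst⟩ := hcover i hil
          exact Finset.mem_image.2 ⟨t, Finset.mem_range.2 ht, hst⟩
        have h7 := Finset.card_le_card hsubset
        have h8 := Finset.card_image_le (s := Finset.range m) (f := σ)
        rw [Finset.card_range] at h7
        rw [Finset.card_range] at h8
        omega
      have hc1mem : (c + 1) ∈ {k : ℕ | 1 ≤ k ∧ (k : ℕ∞) ≤ b} := ⟨by omega, hc1b⟩
      rw [← hunion] at hc1mem
      simp only [Set.mem_iUnion, Set.mem_setOf_eq] at hc1mem
      obtain ⟨i, hil, hc1i⟩ := hc1mem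
      have hni : (nb i).1 = c + 1 := by
        rcases Set.mem_Icc.1 hc1i with ⟨h9, h10⟩
        by_contra hne
        have h11 : (nb i).1 ∈ Set.Icc 1 c := by
          rw [Set.mem_Icc]
          exact ⟨(hblocks i hil).1, by omega⟩
        rw [← hσu] at h11
        simp only [Set.mem_iUnion, Finset.mem_range] at h11
        obtain ⟨t, ht, h12⟩ := h11
        have hne2 : σ t ≠ i := by
          intro hEq
          have h13 := hIσsub t ht (hEq ▸ hc1i)
          rw [Set.mem_Icc] at h13; omega
        exact Set.disjoint_left.1 (hdisj (σ t) i (hσl t ht) hil hne2) h12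
          (Set.mem_Icc.2 ⟨le_refl _, (hblocks i hil).2.1⟩)
      have hcb : c + 1 ≤ (nb i).2 := hni ▸ (hblocks i hil).2.1
      have hnext : Next N e ε (c + 1) (nb i).2 := by
        obtain ⟨hb1, hb2, hb3, hb4, hb5⟩ := hblocks i hil
        refine ⟨by omega, hcb, ?_, ?_⟩
        · intro j hj1 hj2
          rw [hval i hil j (Set.mem_Icc.2 ⟨by omega, by omega⟩), hb3 j hj2, hni]
        · rw [hval i hil (nb i).2 (Set.mem_Icc.2 ⟨hb2, le_refl _⟩), ← hni]
          exact hb4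
      refine ⟨(nb i).2, Function.update σ m i, ChainTo.succ hchain hnext, ?_, ?_, ?_⟩
      · intro t ht
        rcases Nat.lt_or_ge t m with h1 | h1
        · rw [Function.update_of_ne (by omega)]; exact hσl t h1
        · have ht' : t = m := by omega
          subst ht'; rw [Function.update_self]; exact hil
      · have hne' : ∀ s, s < m → σ s ≠ i := by
          intro s hs hEq2
          have h13 := hIσsub s hs (hEq2 ▸ hc1i)
          rw [Set.mem_Icc] at h13; omega
        intro t t' ht ht' hEq
        rcases Nat.lt_or_ge t m with h1 | h1 <;> rcases Nat.lt_or_ge t' m with h2 | h2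
        · rw [Function.update_of_ne (by omega), Function.update_of_ne (by omega)] at hEq
          exact hσinj t t' h1 h2 hEq
        · have ht'm : t' = m := by omega
          subst ht'm
          rw [Function.update_of_ne (by omega), Function.update_self] at hEq
          exact absurd hEq (hne' t h1)
        · have htm : t = m := by omega
          subst htm
          rw [Function.update_self, Function.update_of_ne (by omega)] at hEq
          exact absurd hEq.symm (hne' t' h2)
        · omega
      · rw [Finset.range_add_one, Finset.set_biUnion_insert, Function.update_self]
        have hcong : (⋃ t ∈ Finset.range m,
              Set.Icc (nb (Function.update σ m i t)).1 (nb (Function.update σ m i t)).2)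
            = ⋃ t ∈ Finset.range m, Set.Icc (nb (σ t)).1 (nb (σ t)).2 := by
          refine Set.iUnion₂_congr ?_
          intro t ht
          rw [Function.update_of_ne (by rw [Finset.mem_range] at ht; omega)]
        rw [hcong, hσu, hni]
        ext x
        simp only [Set.mem_union, Set.mem_Icc]
        omega
  intro m hm
  obtain ⟨c, σ, hchain, -⟩ := main m hm
  exact ⟨c, hchain⟩

end Aux

/-- Canonical `L*`-decomposition of a member of `Ẽ*`: there is a unique greatest
`ℓ ∈ ℕ∞` admitting a decomposition `ε = ζ^1 + … + ζ^ℓ + μ` (proper `L*`-blocks whose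
support intervals partition `[1,b]`, `μ` vanishing up to `b`), and any decomposition
realizing this greatest `ℓ` satisfies `β̄^{b+1} ≤_d μ`; if `ℓ = ∞` then `μ = 0` and
`ε ∈ E*`. -/
theorem canonical_star_decomposition (N M : ℕ) (e et : ℕ → ℕ)
    (hN : 2 ≤ N) (hM : 2 ≤ M) (he : 1 ≤ e 1) (het : 1 ≤ et 1)
    (hsub : {μ | memColl N e μ} ⊂ {μ | memColl M et μ})
    (ε : ℕ → ℕ) (hε : memStar M et ε) :
    ∃! l : ℕ∞,
      IsGreatest {l' : ℕ∞ | ∃ ζ nb b μ, DecompData N e ε l' ζ nb b μ} l ∧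
      ∀ ζ nb b μ, DecompData N e ε l ζ nb b μ →
        (∀ bn : ℕ, (bn : ℕ∞) = b → dLE (maxStarBlock N e (bn + 1)) μ) ∧
        (l = ⊤ → μ = 0 ∧ memStar N e ε) := by
  classical
  have hε0 : ε 0 = 0 := memStar_apply_zero hε
  have hS_chain : ∀ l' : ℕ∞, (∃ ζ nb b μ, DecompData N e ε l' ζ nb b μ) →
      ∀ m : ℕ, (m : ℕ∞) ≤ l' → ∃ c, ChainTo N e ε m c := by
    rintro l' ⟨ζ, nb, b, μ, D⟩ m hm
    exact decomp_chain D m hm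
  by_cases hall : ∀ m : ℕ, ∃ c, ChainTo N e ε m c
  · -- greatest element is ⊤
    obtain ⟨ζ0, nb0, D0⟩ := chainAll_decomp hε0 hall
    have hmemTop : (⊤ : ℕ∞) ∈ {l' : ℕ∞ | ∃ ζ nb b μ, DecompData N e ε l' ζ nb b μ} :=
      ⟨ζ0, nb0, ⊤, fun _ => 0, D0⟩
    have hGtop : IsGreatest {l' : ℕ∞ | ∃ ζ nb b μ, DecompData N e ε l' ζ nb b μ} ⊤ :=
      ⟨hmemTop, fun l' _ => le_top⟩
    refine ⟨⊤, ⟨hGtop, ?_⟩, ?_⟩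
    · intro ζ nb b μ D
      obtain ⟨hblocks, hdisj, hunion, hμ, hsum⟩ := D
      have hbtop : b = ⊤ := by
        by_contra hb
        obtain ⟨bn, hbn⟩ : ∃ bn : ℕ, (bn : ℕ∞) = b := by
          lift b to ℕ using hb with bn
          exact ⟨bn, rfl⟩
        have hmem : ∀ i : ℕ, (nb i).1 ∈ Finset.Icc 1 bn := by
          intro i
          have h1 : (nb i).1 ∈ {k : ℕ | 1 ≤ k ∧ (k : ℕ∞) ≤ b} := by
            rw [← hunion]
            exact Set.mem_biUnion (ENat.coe_lt_top i)
              (Set.mem_Icc.2 ⟨le_refl _, (hblocks i (ENat.coe_lt_top i)).2.1⟩)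
          rw [Finset.mem_Icc]
          refine ⟨h1.1, ?_⟩
          have h2 := h1.2
          rw [← hbn, Nat.cast_le] at h2
          exact h2
        have hinj : Set.InjOn (fun i => (nb i).1) ↑(Finset.range (bn + 2)) := by
          intro i _ j _ hEq
          by_contra hne
          exact Set.disjoint_left.1
            (hdisj i j (ENat.coe_lt_top i) (ENat.coe_lt_top j) hne)
            (Set.mem_Icc.2 ⟨le_refl _, (hblocks i (ENat.coe_lt_top i)).2.1⟩)
            (by rw [show (nb i).1 = (nb j).1 from hEq]
                exact Set.mem_Icc.2 ⟨le_refl _, (hblocks j (ENat.coe_lt_top j)).2.1⟩)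
        have hcard := Finset.card_le_card_of_injOn (fun i => (nb i).1)
          (fun i _ => hmem i) hinj
        rw [Finset.card_range, Nat.card_Icc] at hcard
        omega
      constructor
      · intro bn hbn
        rw [hbtop] at hbn
        exact absurd hbn (ENat.coe_ne_top bn)
      · intro _
        have hμ0 : μ = 0 := funext fun k => hμ k (hbtop ▸ le_top)
        refine ⟨hμ0, hε.1, ⊤, ζ, nb, fun i hi => hblocks i hi, ?_, ?_⟩
        · intro i j hi hj hij
          rw [← Finset.disjoint_coe, Finset.coe_Icc, Finset.coe_Icc]
          exact hdisj i j hi hj hij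
        · intro k
          rw [hsum k, hμ k (hbtop ▸ le_top), add_zero]
    · rintro y ⟨hy, -⟩
      exact hy.unique hGtop
  · -- greatest element is finite
    have hexists : ∃ m : ℕ, ¬∃ c, ChainTo N e ε m c := not_forall.1 hall
    set m0 := Nat.find hexists with hm0
    have hm0spec : ¬∃ c, ChainTo N e ε m0 c := Nat.find_spec hexists
    have hm0pos : 1 ≤ m0 := by
      rcases Nat.eq_zero_or_pos m0 with h | h
      · exact absurd (h ▸ hm0spec) (not_not.2 ⟨0, ChainTo.zero⟩)
      · exact h
    set L := m0 - 1 with hL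
    have hchainL : ∃ c, ChainTo N e ε L c := by
      by_contra hcon
      exact Nat.find_min hexists (show L < m0 by omega) hcon
    obtain ⟨c0, hc0⟩ := hchainL
    obtain ⟨ζ0, nb0, μ0, D0⟩ := chainTo_decomp hε0 hc0
    have hmemL : ((L : ℕ) : ℕ∞) ∈ {l' : ℕ∞ | ∃ ζ nb b μ, DecompData N e ε l' ζ nb b μ} :=
      ⟨ζ0, nb0, (c0 : ℕ∞), μ0, D0⟩
    have hub : ∀ l' ∈ {l' : ℕ∞ | ∃ ζ nb b μ, DecompData N e ε l' ζ nb b μ},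
        l' ≤ ((L : ℕ) : ℕ∞) := by
      intro l' hl'
      by_contra hgt
      push_neg at hgt
      refine hm0spec ?_
      rcases eq_or_ne l' ⊤ with rfl | hne
      · exact hS_chain ⊤ hl' m0 le_top
      · lift l' to ℕ using hne with m' hm'
        rw [Nat.cast_lt] at hgt
        obtain ⟨c', hc'⟩ := hS_chain _ hl' m' (le_refl _)
        exact chainTo_prefix hc' m0 (by omega)
    have hGL : IsGreatest {l' : ℕ∞ | ∃ ζ nb b μ, DecompData N e ε l' ζ nb b μ}
        ((L : ℕ) : ℕ∞) := ⟨hmemL, hub⟩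
    refine ⟨(L : ℕ∞), ⟨hGL, ?_⟩, ?_⟩
    · intro ζ nb b μ D
      constructor
      · intro bn hbn
        by_contra hnle
        obtain ⟨hblocks, hdisj, hunion, hμv, hsum⟩ := D
        have hne : μ ≠ maxStarBlock N e (bn + 1) := by
          intro hEq; exact hnle (Or.inl hEq.symm)
        have hdiff : ∃ k, μ k ≠ maxStarBlock N e (bn + 1) k := Function.ne_iff.1 hne
        set k0 := Nat.find hdiff with hk0def
        have hk0spec : μ k0 ≠ maxStarBlock N e (bn + 1) k0 := Nat.find_spec hdiff
        have hk0min : ∀ j, j < k0 → μ j = maxStarBlock N e (bn + 1) j := by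
          intro j hj
          by_contra hcon
          exact Nat.find_min hdiff hj hcon
        have hk0lt : μ k0 < maxStarBlock N e (bn + 1) k0 := by
          rcases Nat.lt_or_ge (μ k0) (maxStarBlock N e (bn + 1) k0) with h | h
          · exact h
          · exfalso
            refine hnle (Or.inr ⟨k0, lt_of_le_of_ne h (Ne.symm hk0spec),
              fun j hj => (hk0min j hj).symm⟩)
        have hk0ge : bn + 1 ≤ k0 := le_of_maxStarBlock_pos (N := N) (e := e) (by omega)
        have hμbn : ∀ j, j ≤ bn → μ j = 0 := by
          intro j hj
          exact hμv j (by rw [← hbn]; exact Nat.cast_le.2 hj)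
        have hIbn : ∀ i : ℕ, (i : ℕ∞) < (L : ℕ∞) →
            ∀ x ∈ Set.Icc (nb i).1 (nb i).2, 1 ≤ x ∧ x ≤ bn := by
          intro i hi x hx
          have h1 : x ∈ {k : ℕ | 1 ≤ k ∧ (k : ℕ∞) ≤ b} := by
            rw [← hunion]
            exact Set.mem_biUnion hi hx
          refine ⟨h1.1, ?_⟩
          have h2 := h1.2
          rw [← hbn, Nat.cast_le] at h2
          exact h2
        have hnewmem : ((L + 1 : ℕ) : ℕ∞) ∈
            {l' : ℕ∞ | ∃ ζ nb b μ, DecompData N e ε l' ζ nb b μ} := by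
          refine ⟨fun i => if i < L then ζ i
              else fun j => if bn + 1 ≤ j ∧ j ≤ k0 then μ j else 0,
            fun i => if i < L then nb i else (bn + 1, k0), (k0 : ℕ∞),
            fun j => if j ≤ k0 then 0 else μ j, ?_, ?_, ?_, ?_, ?_⟩ <;> dsimp only
          · intro i hi
            rw [Nat.cast_lt] at hi
            by_cases hiL : i < L
            · rw [if_pos hiL, if_pos hiL]
              exact hblocks i (Nat.cast_lt.2 hiL)
            · rw [if_neg hiL, if_neg hiL]
              refine ⟨by omega, hk0ge, ?_, ?_, ?_⟩
              · intro j hj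
                beta_reduce
                by_cases hcase : bn + 1 ≤ j
                · rw [if_pos ⟨hcase, by omega⟩]
                  exact hk0min j hj
                · rw [if_neg (by omega), maxStarBlock_of_lt (show j < bn + 1 by omega)]
              · beta_reduce
                rw [if_pos ⟨hk0ge, le_refl _⟩]
                exact hk0lt
              · intro j hj; beta_reduce; rw [if_neg (by omega)]
          · have key : ∀ i : ℕ, i < L →
                Disjoint (Set.Icc (nb i).1 (nb i).2) (Set.Icc (bn + 1) k0) := by
              intro i hi
              rw [Set.disjoint_left]
              intro x hx hx'
              have h1 := hIbn i (Nat.cast_lt.2 hi) x hx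
              rw [Set.mem_Icc] at hx'
              omega
            intro i j hi hj hij
            rw [Nat.cast_lt] at hi hj
            by_cases hiL : i < L <;> by_cases hjL : j < L
            · rw [if_pos hiL, if_pos hjL]
              exact hdisj i j (Nat.cast_lt.2 hiL) (Nat.cast_lt.2 hjL) hij
            · rw [if_pos hiL, if_neg hjL]
              exact key i hiL
            · rw [if_neg hiL, if_pos hjL]
              exact (key j hjL).symm
            · omega
          · ext x
            simp only [Set.mem_iUnion, Set.mem_setOf_eq, Nat.cast_lt, Nat.cast_le]
            constructor
            · rintro ⟨i, hi, hx⟩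
              by_cases hiL : i < L
              · rw [if_pos hiL] at hx
                have h1 := hIbn i (Nat.cast_lt.2 hiL) x hx
                exact ⟨h1.1, by omega⟩
              · rw [if_neg hiL] at hx
                rw [Set.mem_Icc] at hx
                exact ⟨by omega, hx.2⟩
            · rintro ⟨hx1, hx2⟩
              by_cases hxc : x ≤ bn
              · have h1 : x ∈ {k : ℕ | 1 ≤ k ∧ (k : ℕ∞) ≤ b} :=
                  ⟨hx1, by rw [← hbn]; exact Nat.cast_le.2 hxc⟩
                rw [← hunion] at h1
                simp only [Set.mem_iUnion, Set.mem_setOf_eq] at h1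
                obtain ⟨i, hi, hx⟩ := h1
                rw [Nat.cast_lt] at hi
                exact ⟨i, by omega, by rw [if_pos hi]; exact hx⟩
              · exact ⟨L, by omega, by rw [if_neg (lt_irrefl L)]
                                       exact Set.mem_Icc.2 ⟨by omega, hx2⟩⟩
          · intro k hk
            rw [Nat.cast_le] at hk
            exact if_pos hk
          · intro j
            have hold := hsum j
            rw [tsum_ite_range] at hold
            rw [tsum_ite_range, Finset.sum_range_succ, if_neg (lt_irrefl L)]
            have hcong : ∀ i ∈ Finset.range L,
                (if i < L then ζ i else fun j => if bn + 1 ≤ j ∧ j ≤ k0 then μ j else 0) j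
                  = ζ i j := by
              intro i hi
              rw [if_pos (Finset.mem_range.1 hi)]
            rw [Finset.sum_congr rfl hcong]
            beta_reduce
            by_cases h1 : j ≤ bn
            · rw [if_neg (by omega), if_pos (by omega), hold, hμbn j h1]
            · by_cases h2 : j ≤ k0
              · rw [if_pos (by omega), if_pos h2, hold]
                have : μ j = maxStarBlock N e (bn + 1) j ∨ j = k0 := by
                  rcases Nat.lt_or_ge j k0 with h | h
                  · exact Or.inl (hk0min j h)
                  · exact Or.inr (by omega)
                omega
              · rw [if_neg (by omega), if_neg h2, hold]
                omega
        have hle := hub _ hnewmem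
        rw [Nat.cast_le] at hle
        omega
      · intro hLtop
        exact absurd hLtop (ENat.coe_ne_top L)
    · rintro y ⟨hy, -⟩
      exact hy.unique hGL
end

section
/- Let L = (e_1, …, e_N) be a list of non-negative integers with N ≥ 2 and e_1 ≥ 1. For n ≥ 1 let C_n be the number of tuples (ζ^1, …, ζ^ℓ) of proper L*-blocks whose support intervals are pairwise disjoint and partition the interval [1, n], and set C_0 = 1. Then C_k = Σ_{j=1}^{k} e_j C_{k−j} for 1 ≤ k ≤ N, and C_n = Σ_{k=1}^{N−1} e_k C_{n−k} + (1 + e_N) C_{n−N} for all n ≥ N + 1. -/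
/-!
Classify a decomposition of `[1, n]` by its last block. That block has support `[a, n]` for some
`1 ≤ a ≤ n`, it is determined by its last coefficient, of which there are
`β̄^a_n = e_{(n - a) mod N + 1}` choices, and removing it leaves a decomposition of `[1, a - 1]`.
Hence `C_n = ∑_{j=1}^{n} ē_j C_{n-j}` with `ē_j = β̄^1_j` the `N`-periodic extension of `L`. For
`n ≤ N` this is the first claim; for `n > N` periodicity turns the terms with `j > N` into the same
sum for `C_{n-N}`, which contributes the extra `C_{n-N}`.
-/

open Filter Topology

open Zeck

/-- Tuples of proper `L*`-blocks (with their support intervals) whose support intervals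
partition `[1, n]`, listed in increasing order of their intervals. -/
def Zeck.decompTuples (N : ℕ) (e : ℕ → ℕ) (n : ℕ) : Set (List ((ℕ → ℕ) × ℕ × ℕ)) :=
  {l | (∀ p ∈ l, IsProperStarBlock N e p.1 p.2.1 p.2.2) ∧
    List.Chain' (fun p q => q.2.1 = p.2.2 + 1) l ∧
    (l.head?.map (fun p => p.2.1) = some 1) ∧
    (l.getLast?.map (fun p => p.2.2) = some n)}

theorem Set.ncard_biUnion_finset {ι α : Type*} {s : Finset ι} {t : ι → Set α}
    (ht : ∀ i ∈ s, (t i).Finite) (h : (s : Set ι).PairwiseDisjoint t) :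
    (⋃ i ∈ s, t i).ncard = ∑ i ∈ s, (t i).ncard := by
  rw [← finsum_mem_coe_finset]
  exact s.finite_toSet.ncard_biUnion ht h

theorem eq_sum_add_of_periodic_recurrence {R : Type*} [Semiring R] {N : ℕ} {E C : ℕ → R}
    (hE : ∀ j, 1 ≤ j → E (j + N) = E j)
    (hC : ∀ n, 1 ≤ n → C n = ∑ j ∈ Finset.Icc 1 n, E j * C (n - j)) {n : ℕ} (hn : N + 1 ≤ n) :
    C n = ∑ j ∈ Finset.Icc 1 N, E j * C (n - j) + C (n - N) := by
  have hIcc (k : ℕ) : Finset.Icc 1 k = Finset.Ioc 0 k := Finset.Icc_add_one_left_eq_Ioc 0 k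
  have htail : ∑ j ∈ Finset.Ioc N n, E j * C (n - j) = C (n - N) := by
    have hmap : Finset.Ioc N n = (Finset.Ioc 0 (n - N)).map (addRightEmbedding N) := by
      rw [Finset.map_add_right_Ioc, zero_add, Nat.sub_add_cancel (by omega)]
    rw [hC (n - N) (by omega), hIcc, hmap, Finset.sum_map]
    refine Finset.sum_congr rfl fun j hj => ?_
    rw [addRightEmbedding_apply, hE j (Finset.mem_Ioc.mp hj).1, Nat.sub_add_eq, Nat.sub_right_comm]
  rw [hC n (by omega), hIcc, hIcc, ← Finset.sum_Ioc_consecutive _ (Nat.zero_le N) (by omega), htail]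

namespace Zeck

section Blocks

variable (N : ℕ) (e : ℕ → ℕ)

/-- The proper `L*`-block at index `a` with support interval `[a, b]` and last coefficient `v`. -/
def properStarBlock (a b v : ℕ) : ℕ → ℕ :=
  fun k => if k < b then maxStarBlock N e a k else if k = b then v else 0

@[simp]
theorem properStarBlock_apply_self (a b v : ℕ) : properStarBlock N e a b v b = v := by
  simp [properStarBlock]

variable {N e}

theorem isProperStarBlock_iff {ζ : ℕ → ℕ} {a b : ℕ} :
    IsProperStarBlock N e ζ a b ↔
      1 ≤ a ∧ a ≤ b ∧ ∃ v < maxStarBlock N e a b, ζ = properStarBlock N e a b v := by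
  constructor
  · rintro ⟨ha, hab, hlt, hb, hgt⟩
    refine ⟨ha, hab, ζ b, hb, funext fun k => ?_⟩
    rcases lt_trichotomy k b with hk | rfl | hk
    · simp [properStarBlock, hk, hlt k hk]
    · simp [properStarBlock]
    · simp [properStarBlock, hk.not_gt, hk.ne', hgt k hk]
  · rintro ⟨ha, hab, v, hv, rfl⟩
    refine ⟨ha, hab, fun j hj => by simp [properStarBlock, hj], by simpa [properStarBlock], ?_⟩
    intro j hj
    simp [properStarBlock, hj.not_gt, hj.ne']

variable (N e)

theorem maxStarBlock_eq_maxStarBlock_one {a b : ℕ} (hab : a ≤ b) :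
    maxStarBlock N e a b = maxStarBlock N e 1 (b + 1 - a) := by
  simp only [maxStarBlock, hab, if_true, show 1 ≤ b + 1 - a by omega]
  congr 3
  omega

theorem maxStarBlock_one_of_le {j : ℕ} (hj : 1 ≤ j) (hjN : j ≤ N) :
    maxStarBlock N e 1 j = e j := by
  simp only [maxStarBlock, hj, if_true, Nat.mod_eq_of_lt (show j - 1 < N by omega)]
  congr 1
  omega

theorem maxStarBlock_one_add_period {j : ℕ} (hj : 1 ≤ j) :
    maxStarBlock N e 1 (j + N) = maxStarBlock N e 1 j := by
  simp only [maxStarBlock, hj, if_true, show 1 ≤ j + N by omega, show j + N - 1 = j - 1 + N by omega,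
    Nat.add_mod_right]

end Blocks

section Decompositions

variable (N : ℕ) (e : ℕ → ℕ)

/-- `decompTuples` extended by the empty decomposition of the empty interval `[1, 0]`. -/
def decompTuples₀ (m : ℕ) : Set (List ((ℕ → ℕ) × ℕ × ℕ)) :=
  if m = 0 then {[]} else decompTuples N e m

theorem nil_notMem_decompTuples (n : ℕ) : [] ∉ decompTuples N e n := by
  simp [decompTuples]

theorem nil_mem_decompTuples₀_iff (m : ℕ) : [] ∈ decompTuples₀ N e m ↔ m = 0 := by
  by_cases hm : m = 0 <;> simp [decompTuples₀, hm, nil_notMem_decompTuples]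

theorem concat_mem_decompTuples_iff {n : ℕ} {l : List ((ℕ → ℕ) × ℕ × ℕ)} {p : (ℕ → ℕ) × ℕ × ℕ} :
    l ++ [p] ∈ decompTuples N e n ↔
      p.2.2 = n ∧ IsProperStarBlock N e p.1 p.2.1 p.2.2 ∧ l ∈ decompTuples₀ N e (p.2.1 - 1) := by
  rcases List.eq_nil_or_concat l with rfl | ⟨l, q, rfl⟩
  · simp only [decompTuples, Set.mem_ofPred_eq, List.Chain', List.nil_append, List.forall_mem_singleton,
      List.isChain_singleton, List.head?_cons, List.getLast?_singleton, Option.map_some,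
      Option.some.injEq, nil_mem_decompTuples₀_iff, true_and]
    constructor
    · rintro ⟨h, ha, rfl⟩
      exact ⟨rfl, h, by omega⟩
    · rintro ⟨rfl, h, ha⟩
      exact ⟨h, by have := h.1; omega, rfl⟩
  · rw [List.concat_eq_append]
    have hne : l ++ [q] ≠ [] := by simp
    simp only [decompTuples, decompTuples₀, Set.mem_ofPred_eq, List.Chain', List.forall_mem_append,
      List.forall_mem_singleton, List.isChain_append (l₁ := l ++ [q]), List.isChain_singleton,
      List.getLast?_concat, List.head?_cons, Option.mem_def, Option.some.injEq, forall_eq',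
      List.head?_append_of_ne_nil _ hne, Option.map_some, true_and]
    have hq_end : IsProperStarBlock N e q.1 q.2.1 q.2.2 → 1 ≤ q.2.2 := fun h => h.1.trans h.2.1
    split_ifs with ha
    · simp only [Set.mem_singleton_iff, hne, and_false, iff_false]
      rintro ⟨⟨⟨-, hq⟩, -⟩, ⟨-, hpq⟩, -⟩
      have := hq_end hq
      omega
    · simp only [Set.mem_ofPred_eq, List.forall_mem_append, List.forall_mem_singleton,
        List.getLast?_concat, Option.map_some, Option.some.injEq]
      constructor
      · rintro ⟨⟨hl, hp⟩, ⟨hc, hpq⟩, hh, hn⟩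
        exact ⟨hn, hp, hl, hc, hh, by omega⟩
      · rintro ⟨hn, hp, hl, hc, hh, hqp⟩
        have := hq_end hl.2
        exact ⟨⟨hl, hp⟩, ⟨hc, by omega⟩, hh, hn⟩

theorem decompTuples_eq_biUnion (n : ℕ) :
    decompTuples N e n = ⋃ a ∈ Finset.Icc 1 n, ⋃ v ∈ Finset.range (maxStarBlock N e a n),
      (· ++ [(properStarBlock N e a n v, a, n)]) '' decompTuples₀ N e (a - 1) := by
  ext l
  simp only [Set.mem_iUnion, Set.mem_image, Finset.mem_Icc, Finset.mem_range, exists_prop]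
  rcases List.eq_nil_or_concat l with rfl | ⟨l, ⟨ζ, a, b⟩, rfl⟩
  · simp [nil_notMem_decompTuples]
  · simp only [List.concat_eq_append, concat_mem_decompTuples_iff, isProperStarBlock_iff,
      List.append_singleton_inj, Prod.mk.injEq]
    constructor
    · rintro ⟨rfl, ⟨ha, hab, v, hv, rfl⟩, hl⟩
      exact ⟨a, ⟨ha, hab⟩, v, hv, l, hl, rfl, rfl, rfl, rfl⟩
    · rintro ⟨a, ⟨ha, hab⟩, v, hv, l, hl, rfl, rfl, rfl, rfl⟩
      exact ⟨rfl, ⟨ha, hab, v, hv, rfl⟩, hl⟩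

theorem decompTuples₀_finite (m : ℕ) : (decompTuples₀ N e m).Finite := by
  induction m using Nat.strong_induction_on with
  | _ m ih =>
    unfold decompTuples₀
    split_ifs with hm
    · exact Set.finite_singleton _
    · rw [decompTuples_eq_biUnion]
      refine Set.Finite.biUnion (Finset.finite_toSet _) fun a ha => ?_
      refine Set.Finite.biUnion (Finset.finite_toSet _) fun v _ => (ih (a - 1) ?_).image _
      have := Finset.mem_Icc.mp ha
      omega

theorem ncard_decompTuples (n : ℕ) :
    (decompTuples N e n).ncard =
      ∑ a ∈ Finset.Icc 1 n, maxStarBlock N e a n * (decompTuples₀ N e (a - 1)).ncard := by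
  have hfin a v : ((· ++ [(properStarBlock N e a n v, a, n)]) '' decompTuples₀ N e (a - 1)).Finite :=
    (decompTuples₀_finite N e (a - 1)).image _
  have hlast {a v a' v' : ℕ} {l l' : List ((ℕ → ℕ) × ℕ × ℕ)}
      (h : l ++ [(properStarBlock N e a n v, a, n)] = l' ++ [(properStarBlock N e a' n v', a', n)]) :
      a = a' ∧ v = v' := by
    simp only [List.append_singleton_inj, Prod.mk.injEq] at h
    obtain ⟨-, hζ, ha, -⟩ := h
    exact ⟨ha, by simpa using congrFun hζ n⟩
  rw [decompTuples_eq_biUnion, Set.ncard_biUnion_finset]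
  · refine Finset.sum_congr rfl fun a _ => ?_
    rw [Set.ncard_biUnion_finset (fun v _ => hfin a v)]
    · simp [Set.ncard_image_of_injective _ (List.append_left_injective _)]
    · rintro v - v' - hvv'
      refine Set.disjoint_left.mpr ?_
      rintro _ ⟨l, -, rfl⟩ ⟨l', -, h⟩
      exact hvv' (hlast h.symm).2
  · exact fun a _ => Set.Finite.biUnion (Finset.finite_toSet _) fun v _ => hfin a v
  · rintro a - a' - haa'
    simp only [Set.disjoint_iUnion_left, Set.disjoint_iUnion_right]
    rintro v - v' -
    refine Set.disjoint_left.mpr ?_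
    rintro _ ⟨l, -, rfl⟩ ⟨l', -, h⟩
    exact haa' (hlast h.symm).1

theorem ncard_decompTuples₀_eq_sum {n : ℕ} (hn : 1 ≤ n) :
    (decompTuples₀ N e n).ncard =
      ∑ j ∈ Finset.Icc 1 n, maxStarBlock N e 1 j * (decompTuples₀ N e (n - j)).ncard := by
  rw [decompTuples₀, if_neg (by omega), ncard_decompTuples]
  refine Finset.sum_nbij' (fun a => n + 1 - a) (fun j => n + 1 - j) ?_ ?_ ?_ ?_ ?_ <;>
    intro a ha <;> simp only [Finset.mem_Icc] at ha ⊢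
  any_goals omega
  rw [maxStarBlock_eq_maxStarBlock_one N e ha.2, show n - (n + 1 - a) = a - 1 by omega]

end Decompositions

end Zeck

theorem count_decompositions_recurrence_general (N : ℕ) (e : ℕ → ℕ) (hN : 2 ≤ N)
    (C : ℕ → ℕ) (hC0 : C 0 = 1)
    (hC : ∀ n, 1 ≤ n → C n = Set.ncard (Zeck.decompTuples N e n)) :
    (∀ k, 1 ≤ k → k ≤ N → C k = ∑ j ∈ Finset.Icc 1 k, e j * C (k - j)) ∧
    (∀ n, N + 1 ≤ n →
      C n = (∑ k ∈ Finset.Ico 1 N, e k * C (n - k)) + (1 + e N) * C (n - N)) := by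
  have hC₀ (m : ℕ) : C m = (decompTuples₀ N e m).ncard := by
    rcases Nat.eq_zero_or_pos m with rfl | hm
    · simp [decompTuples₀, hC0]
    · simp [decompTuples₀, hm.ne', hC m hm]
  have hrec (n : ℕ) (hn : 1 ≤ n) : C n = ∑ j ∈ Finset.Icc 1 n, maxStarBlock N e 1 j * C (n - j) := by
    simp only [hC₀, ncard_decompTuples₀_eq_sum N e hn]
  have he (j : ℕ) (hj : j ∈ Finset.Icc 1 N) : maxStarBlock N e 1 j = e j :=
    maxStarBlock_one_of_le N e (Finset.mem_Icc.mp hj).1 (Finset.mem_Icc.mp hj).2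
  refine ⟨fun k hk hkN => ?_, fun n hn => ?_⟩
  · rw [hrec k hk]
    exact Finset.sum_congr rfl fun j hj => by
      rw [he j (Finset.Icc_subset_Icc_right hkN hj)]
  · rw [eq_sum_add_of_periodic_recurrence (fun _ => maxStarBlock_one_add_period N e) hrec hn,
      Finset.sum_congr rfl fun j hj => by rw [he j hj], ← Finset.Ico_add_one_right_eq_Icc,
      Finset.sum_Ico_succ_top (by omega)]
    ring

/-- Recurrence for the number `C_n` of decompositions of `[1, n]` into proper
`L*`-blocks. -/
theorem count_decompositions_recurrence (N : ℕ) (e : ℕ → ℕ) (hN : 2 ≤ N) (he : 1 ≤ e 1)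
    (C : ℕ → ℕ) (hC0 : C 0 = 1)
    (hC : ∀ n, 1 ≤ n → C n = Set.ncard (Zeck.decompTuples N e n)) :
    (∀ k, 1 ≤ k → k ≤ N → C k = ∑ j ∈ Finset.Icc 1 k, e j * C (k - j)) ∧
    (∀ n, N + 1 ≤ n →
      C n = (∑ k ∈ Finset.Ico 1 N, e k * C (n - k)) + (1 + e N) * C (n - N)) :=
  count_decompositions_recurrence_general N e hN C hC0 hC
end

section
/- Let L = (e_1, …, e_N) be a list of non-negative integers with N ≥ 2 and e_1 ≥ 1, and let C_n (n ≥ 0) be as in the context. Then, in the ring of formal power series over the integers, (Σ_{n=0}^{∞} C_n X^n) · (1 − Σ_{k=1}^{N−1} e_k X^k − (1 + e_N) X^N) = 1 − X^N; equivalently, the power series Σ_n C_n x^n converges on a neighborhood of 0 and equals (1 − x^N)/f(x) there, where f(x) = 1 − Σ_{k=1}^{N−1} e_k x^k − (1 + e_N) x^N. -/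
open Filter Topology

open Zeck

/-!
A proper `L*`-block is determined by its support `[a, b]` and its last entry, which takes
`e ((b - a) % N + 1)` values. Splitting off the first block of a decomposition therefore gives
`C (n + 1) = ∑_{i + j = n} C i * w j` with the `N`-periodic weights `w j = e (j % N + 1)`, i.e.
`(∑ C n X^n) * (1 - X * ∑ w j X^j) = 1`. Periodicity gives
`(1 - X^N) * ∑ w j X^j = ∑_{j < N} e (j + 1) X^j`, and multiplying through by `1 - X^N` yields
the formal identity. Since `C n ≤ (1 + ∑ e k)^n`, the series converges absolutely near `0`,
where the Cauchy product with the polynomial `f` turns the formal identity into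
`(∑ C n x^n) * f x = 1 - x^N`; and `f 0 = 1`.
-/

open Finset

namespace Polynomial

theorem hasSum_coeff_mul_pow {R : Type*} [Semiring R] [TopologicalSpace R] (p : R[X]) (x : R) :
    HasSum (fun n => p.coeff n * x ^ n) (p.eval x) := by
  rw [eval_eq_sum_range]
  refine hasSum_sum_of_ne_finset_zero fun n hn => ?_
  rw [coeff_eq_zero_of_natDegree_lt (by simpa [Nat.lt_succ_iff] using hn), zero_mul]

theorem summable_norm_coeff_mul_pow {R : Type*} [NormedRing R] (p : R[X]) (x : R) :
    Summable fun n => ‖p.coeff n * x ^ n‖ :=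
  summable_of_ne_finset_zero (s := range (p.natDegree + 1)) fun n hn => by
    rw [coeff_eq_zero_of_natDegree_lt (by simpa [Nat.lt_succ_iff] using hn), zero_mul, norm_zero]

end Polynomial

namespace PowerSeries

theorem one_sub_X_pow_mul_mk_of_periodic {R : Type*} [CommRing R] {N : ℕ} {W : ℕ → R}
    (hW : ∀ j, W (j + N) = W j) :
    (1 - X ^ N) * mk W = ∑ j ∈ range N, C (W j) * X ^ j := by
  ext n
  simp only [sub_mul, one_mul, map_sub, coeff_X_pow_mul', coeff_mk, map_sum, coeff_C_mul_X_pow,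
    sum_ite_eq, mem_range]
  by_cases hn : N ≤ n
  · rw [if_pos hn, if_neg (by omega), ← hW (n - N), Nat.sub_add_cancel hn, sub_self]
  · rw [if_neg hn, if_pos (by omega), sub_zero]

variable {𝕜 : Type*} [NormedField 𝕜] [CompleteSpace 𝕜]

theorem tsum_coeff_mul_mul_pow {f g : PowerSeries 𝕜} {x : 𝕜}
    (hf : Summable fun n => ‖coeff n f * x ^ n‖) (hg : Summable fun n => ‖coeff n g * x ^ n‖) :
    ∑' n, coeff n (f * g) * x ^ n = (∑' n, coeff n f * x ^ n) * ∑' n, coeff n g * x ^ n := by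
  rw [tsum_mul_tsum_eq_tsum_sum_antidiagonal_of_summable_norm hf hg]
  refine tsum_congr fun n => ?_
  rw [coeff_mul, sum_mul]
  refine sum_congr rfl fun kl hkl => ?_
  rw [← mem_antidiagonal.mp hkl, pow_add]
  ring

theorem hasSum_coeff_mul_pow_of_mul_eq {f : PowerSeries 𝕜} {p q : Polynomial 𝕜}
    (h : f * p = q) {x : 𝕜} (hf : Summable fun n => ‖coeff n f * x ^ n‖) (hp : p.eval x ≠ 0) :
    HasSum (fun n => coeff n f * x ^ n) (q.eval x / p.eval x) := by
  have hprod := tsum_coeff_mul_mul_pow hf (g := p) (by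
    simpa only [Polynomial.coeff_coe] using p.summable_norm_coeff_mul_pow x)
  simp only [h, Polynomial.coeff_coe, (Polynomial.hasSum_coeff_mul_pow _ x).tsum_eq] at hprod
  rw [hprod, mul_div_cancel_right₀ _ hp]
  exact hf.of_norm.hasSum

end PowerSeries

/-- The sum over all compositions of `n` of the product of `W (k - 1)` over the parts `k`. -/
def weightedCompositions (W : ℕ → ℕ) : ℕ → ℕ
  | 0 => 1
  | n + 1 => ∑ i : Fin (n + 1), weightedCompositions W i * W (n - i)

section weightedCompositions

variable (W : ℕ → ℕ)

@[simp]
theorem weightedCompositions_zero : weightedCompositions W 0 = 1 := by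
  rw [weightedCompositions]

theorem weightedCompositions_succ (n : ℕ) :
    weightedCompositions W (n + 1) = ∑ i ∈ range (n + 1), weightedCompositions W i * W (n - i) := by
  rw [weightedCompositions,
    Fin.sum_univ_eq_sum_range (fun i => weightedCompositions W i * W (n - i))]

theorem weightedCompositions_le_pow {B : ℕ} (hW : ∀ j, W j ≤ B) (n : ℕ) :
    weightedCompositions W n ≤ (B + 1) ^ n := by
  induction n using Nat.strong_induction_on with
  | _ n ih =>
    rcases n with _ | n
    · simp
    calc weightedCompositions W (n + 1)
        = ∑ i ∈ range (n + 1), weightedCompositions W i * W (n - i) := weightedCompositions_succ W n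
      _ ≤ ∑ i ∈ range (n + 1), (B + 1) ^ i * B :=
          sum_le_sum fun i hi => Nat.mul_le_mul (ih i (by simpa [Nat.lt_succ_iff] using hi)) (hW _)
      _ ≤ (B + 1) ^ (n + 1) := by rw [← sum_mul, ← geom_sum_mul_add B (n + 1)]; omega

theorem mk_weightedCompositions_mul_one_sub_X_mul_mk {R : Type*} [CommRing R] :
    PowerSeries.mk (fun n => (weightedCompositions W n : R)) *
      (1 - PowerSeries.X * PowerSeries.mk fun n => (W n : R)) = 1 := by
  ext (_ | n)
  · simp
  · rw [mul_sub, mul_one, mul_left_comm, map_sub, PowerSeries.coeff_succ_X_mul,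
      PowerSeries.coeff_mul, Nat.sum_antidiagonal_eq_sum_range_succ_mk, PowerSeries.coeff_one,
      PowerSeries.coeff_mk, weightedCompositions_succ]
    simp

theorem summable_norm_weightedCompositions_mul_pow {B : ℕ} (hW : ∀ j, W j ≤ B) {x : ℝ}
    (hx : (B + 1) * |x| < 1) : Summable fun n => ‖(weightedCompositions W n : ℝ) * x ^ n‖ := by
  refine Summable.of_nonneg_of_le (fun n => norm_nonneg _) (fun n => ?_)
    (summable_geometric_of_lt_one (by positivity) hx)
  rw [norm_mul, norm_pow, Real.norm_natCast, Real.norm_eq_abs, mul_pow]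
  gcongr
  exact_mod_cast weightedCompositions_le_pow W hW n

end weightedCompositions

namespace Zeck

section Counting

variable (N : ℕ) (e : ℕ → ℕ)

def blockWeight (j : ℕ) : ℕ := e (j % N + 1)

def IsBlockDecomp : List ((ℕ → ℕ) × ℕ × ℕ) → ℕ → ℕ → Prop
  | [], a, n => a = n + 1
  | p :: t, a, n => IsProperStarBlock N e p.1 a p.2.2 ∧ p.2.1 = a ∧ IsBlockDecomp t (p.2.2 + 1) n

variable {N e}

theorem isBlockDecomp_iff {l : List ((ℕ → ℕ) × ℕ × ℕ)} (hl : l ≠ []) {a n : ℕ} :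
    IsBlockDecomp N e l a n ↔
      (∀ p ∈ l, IsProperStarBlock N e p.1 p.2.1 p.2.2) ∧
      List.IsChain (fun p q => q.2.1 = p.2.2 + 1) l ∧
      l.head?.map (fun p => p.2.1) = some a ∧ l.getLast?.map (fun p => p.2.2) = some n := by
  induction l generalizing a with
  | nil => exact absurd rfl hl
  | cons p t ih =>
    rcases t with _ | ⟨q, t⟩
    · simp only [IsBlockDecomp, List.mem_singleton, forall_eq, List.isChain_singleton]
      grind
    · rw [IsBlockDecomp, ih (List.cons_ne_nil _ _)]
      simp only [List.mem_cons, forall_eq_or_imp, List.isChain_cons_cons, List.getLast?_cons_cons,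
        List.head?_cons, Option.map_some, Option.some.injEq]
      grind

theorem decompTuples_eq_setOf_isBlockDecomp {n : ℕ} (hn : 1 ≤ n) :
    decompTuples N e n = {l | IsBlockDecomp N e l 1 n} := by
  ext (_ | ⟨p, t⟩)
  · exact iff_of_false (fun h => nomatch h.2.2.1) (fun (h : 1 = n + 1) => by omega)
  · exact (isBlockDecomp_iff (List.cons_ne_nil p t)).symm

theorem IsBlockDecomp.le_succ {l : List ((ℕ → ℕ) × ℕ × ℕ)} {a n : ℕ}
    (h : IsBlockDecomp N e l a n) : a ≤ n + 1 := by
  induction l generalizing a with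
  | nil => exact h.le
  | cons p t ih =>
    obtain ⟨⟨-, hab, -⟩, -, ht⟩ := h
    have := ih ht
    omega

theorem setOf_isBlockDecomp_succ_self (n : ℕ) :
    {l | IsBlockDecomp N e l (n + 1) n} = {[]} := by
  ext (_ | ⟨p, t⟩)
  · simp [IsBlockDecomp]
  · simp only [Set.mem_ofPred_eq, Set.mem_singleton_iff, reduceCtorEq, iff_false]
    rintro ⟨⟨-, hab, -⟩, -, ht⟩
    have := ht.le_succ
    omega

theorem setOf_isBlockDecomp_eq_biUnion {a n : ℕ} (han : a ≤ n) :
    {l | IsBlockDecomp N e l a n} =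
      ⋃ k ∈ range (n + 1 - a),
        (fun q : (ℕ → ℕ) × List ((ℕ → ℕ) × ℕ × ℕ) => (q.1, a, n - k) :: q.2) ''
          ({ζ | IsProperStarBlock N e ζ a (n - k)} ×ˢ {l | IsBlockDecomp N e l (n - k + 1) n}) := by
  ext (_ | ⟨⟨ζ, a', b⟩, t⟩)
  · exact iff_of_false (fun (h : a = n + 1) => by omega) (by simp)
  · simp only [Set.mem_ofPred_eq, IsBlockDecomp, Set.mem_iUnion, Set.mem_image, Set.mem_prod,
      mem_range, List.cons.injEq, Prod.mk.injEq, Prod.exists]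
    constructor
    · rintro ⟨hζ, rfl, ht⟩
      have := hζ.2.1
      have := ht.le_succ
      have hb : n - (n - b) = b := by omega
      refine ⟨n - b, by omega, ζ, t, ?_, ?_⟩ <;> rw [hb]
      exacts [⟨hζ, ht⟩, ⟨⟨rfl, rfl, rfl⟩, rfl⟩]
    · rintro ⟨k, -, ζ', t', ⟨hζ', ht'⟩, ⟨rfl, rfl, rfl⟩, rfl⟩
      exact ⟨hζ', rfl, ht'⟩

theorem encard_setOf_isProperStarBlock {a b : ℕ} (ha : 1 ≤ a) (hab : a ≤ b) :
    {ζ | IsProperStarBlock N e ζ a b}.encard = blockWeight N e (b - a) := by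
  have hinj : Set.InjOn (fun ζ : ℕ → ℕ => ζ b) {ζ | IsProperStarBlock N e ζ a b} := by
    rintro ζ ⟨-, -, hlt, -, hgt⟩ ζ' ⟨-, -, hlt', -, hgt'⟩ (hb : ζ b = ζ' b)
    funext j
    rcases lt_trichotomy j b with hj | rfl | hj
    · rw [hlt j hj, hlt' j hj]
    · exact hb
    · rw [hgt j hj, hgt' j hj]
  have himage : (fun ζ : ℕ → ℕ => ζ b) '' {ζ | IsProperStarBlock N e ζ a b} =
      Set.Iio (maxStarBlock N e a b) := by
    ext v
    refine ⟨by rintro ⟨ζ, ⟨-, -, -, hb, -⟩, rfl⟩; exact hb, fun hv => ?_⟩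
    refine ⟨fun j => if j < b then maxStarBlock N e a j else if j = b then v else 0,
      ⟨ha, hab, fun j hj => if_pos hj, by simpa using hv, fun j hj => ?_⟩, by simp⟩
    simp [hj.ne', hj.not_gt]
  rw [← hinj.encard_image, himage, ← coe_range, Set.encard_coe_eq_coe_finsetCard, card_range,
    maxStarBlock, if_pos hab, blockWeight]

theorem encard_setOf_isBlockDecomp {a n : ℕ} (ha : 1 ≤ a) (han : a ≤ n + 1) :
    {l | IsBlockDecomp N e l a n}.encard = weightedCompositions (blockWeight N e) (n + 1 - a) := by
  induction hm : n + 1 - a using Nat.strong_induction_on generalizing a with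
  | _ m ih =>
    obtain rfl | han := han.eq_or_lt
    · simp [← hm, setOf_isBlockDecomp_succ_self]
    have hinj (k : ℕ) : Function.Injective
        fun q : (ℕ → ℕ) × List ((ℕ → ℕ) × ℕ × ℕ) => (q.1, a, n - k) :: q.2 := by
      rintro ⟨ζ, t⟩ ⟨ζ', t'⟩ h
      simp_all
    have hdisj : (range (n + 1 - a) : Set ℕ).PairwiseDisjoint fun k =>
        (fun q : (ℕ → ℕ) × List ((ℕ → ℕ) × ℕ × ℕ) => (q.1, a, n - k) :: q.2) ''
          ({ζ | IsProperStarBlock N e ζ a (n - k)} ×ˢ {l | IsBlockDecomp N e l (n - k + 1) n}) := by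
      intro k hk k' hk' hne
      simp only [coe_range, Set.mem_Iio] at hk hk'
      refine Set.disjoint_left.mpr ?_
      rintro _ ⟨q, -, rfl⟩ ⟨q', -, h⟩
      simp only [List.cons.injEq, Prod.mk.injEq] at h
      omega
    rw [setOf_isBlockDecomp_eq_biUnion (by omega), ← set_biUnion_coe,
      (finite_toSet _).encard_biUnion hdisj, finsum_mem_coe_finset, ← hm,
      show n + 1 - a = n - a + 1 by omega, weightedCompositions_succ, Nat.cast_sum]
    refine sum_congr rfl fun k hk => ?_
    rw [mem_range] at hk
    rw [(hinj k).encard_image, Set.encard_prod, encard_setOf_isProperStarBlock ha (by omega),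
      ih k (by omega) (by omega) (by omega) (by omega), Nat.cast_mul, mul_comm,
      show n - k - a = n - a - k by omega]

theorem ncard_decompTuples_s13 {n : ℕ} (hn : 1 ≤ n) :
    (decompTuples N e n).ncard = weightedCompositions (blockWeight N e) n := by
  rw [Set.ncard_def, decompTuples_eq_setOf_isBlockDecomp hn,
    encard_setOf_isBlockDecomp le_rfl (by omega), Nat.add_sub_cancel, ENat.toNat_natCast]

end Counting

section GeneratingFunction

open Polynomial

variable {N : ℕ} {e : ℕ → ℕ}

noncomputable def denominatorPoly (R : Type*) [CommRing R] (N : ℕ) (e : ℕ → ℕ) : R[X] :=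
  1 - ∑ k ∈ Ico 1 N, C (e k : R) * X ^ k - C (1 + e N : R) * X ^ N

theorem coe_denominatorPoly {R : Type*} [CommRing R] :
    (denominatorPoly R N e : PowerSeries R) =
      1 - ∑ k ∈ Ico 1 N, PowerSeries.C (e k : R) * PowerSeries.X ^ k
        - PowerSeries.C (1 + (e N : R)) * PowerSeries.X ^ N := by
  rw [denominatorPoly, ← coeToPowerSeries.ringHom_apply]
  simp only [map_sub, map_sum, map_mul, map_pow, map_one, coeToPowerSeries.ringHom_apply,
    coe_X, map_natCast, map_add]

theorem eval_denominatorPoly (x : ℝ) : (denominatorPoly ℝ N e).eval x =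
    1 - ∑ k ∈ Ico 1 N, (e k : ℝ) * x ^ k - (1 + (e N : ℝ)) * x ^ N := by
  simp [denominatorPoly, eval_finsetSum]

theorem eval_zero_denominatorPoly (hN : 1 ≤ N) : (denominatorPoly ℝ N e).eval 0 = 1 := by
  have hsum : ∑ k ∈ Ico 1 N, (e k : ℝ) * 0 ^ k = 0 := sum_eq_zero fun k hk => by
    rw [zero_pow (Nat.one_le_iff_ne_zero.mp (mem_Ico.mp hk).1), mul_zero]
  rw [eval_denominatorPoly, hsum, zero_pow (by omega), mul_zero, sub_zero, sub_zero]

theorem coe_denominatorPoly_eq_mul {R : Type*} [CommRing R] (hN : 1 ≤ N) :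
    (denominatorPoly R N e : PowerSeries R) =
      (1 - PowerSeries.X ^ N) *
        (1 - PowerSeries.X * PowerSeries.mk fun j => (blockWeight N e j : R)) := by
  have hperiodic := PowerSeries.one_sub_X_pow_mul_mk_of_periodic (R := R) (N := N)
    (W := fun j => (blockWeight N e j : R)) fun j => by simp [blockWeight]
  obtain ⟨M, rfl⟩ : ∃ M, N = M + 1 := ⟨N - 1, by omega⟩
  have hshift : PowerSeries.X * ∑ j ∈ range (M + 1),
        PowerSeries.C (blockWeight (M + 1) e j : R) * PowerSeries.X ^ j =
      ∑ k ∈ Ico 1 (M + 1), PowerSeries.C (e k : R) * PowerSeries.X ^ k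
        + PowerSeries.C (e (M + 1) : R) * PowerSeries.X ^ (M + 1) := by
    rw [mul_sum, sum_range_succ, sum_Ico_eq_sum_range, Nat.add_sub_cancel]
    congr 1
    · refine sum_congr rfl fun j hj => ?_
      rw [blockWeight, Nat.mod_eq_of_lt (Nat.lt_succ_of_lt (mem_range.mp hj)), add_comm 1 j]
      ring
    · rw [blockWeight, Nat.mod_eq_of_lt M.lt_succ_self]
      ring
  rw [coe_denominatorPoly, mul_sub, mul_one, mul_left_comm, hperiodic, hshift, map_add, map_one]
  ring

theorem mk_weightedCompositions_mul_denominatorPoly {R : Type*} [CommRing R] (hN : 1 ≤ N) :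
    PowerSeries.mk (fun n => (weightedCompositions (blockWeight N e) n : R)) *
      (denominatorPoly R N e : PowerSeries R) = 1 - PowerSeries.X ^ N := by
  rw [coe_denominatorPoly_eq_mul hN, mul_left_comm, mk_weightedCompositions_mul_one_sub_X_mul_mk,
    mul_one]

theorem blockWeight_le_sum (hN : 1 ≤ N) (j : ℕ) : blockWeight N e j ≤ ∑ k ∈ range (N + 1), e k :=
  single_le_sum (f := e) (fun _ _ => Nat.zero_le _) (mem_range.mpr (Nat.succ_lt_succ (j.mod_lt hN)))

theorem eventually_hasSum_weightedCompositions_mul_pow (hN : 1 ≤ N) :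
    ∀ᶠ x in 𝓝 (0 : ℝ), HasSum (fun n => (weightedCompositions (blockWeight N e) n : ℝ) * x ^ n)
      ((1 - x ^ N) / (denominatorPoly ℝ N e).eval x) := by
  have hsmall : ∀ᶠ x in 𝓝 (0 : ℝ), ((∑ k ∈ range (N + 1), e k : ℕ) + 1 : ℝ) * |x| < 1 :=
    (continuous_const.mul continuous_abs).continuousAt.eventually_lt continuousAt_const (by simp)
  have hne : ∀ᶠ x in 𝓝 (0 : ℝ), (denominatorPoly ℝ N e).eval x ≠ 0 :=
    (denominatorPoly ℝ N e).continuous.continuousAt.eventually_ne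
      (by rw [eval_zero_denominatorPoly hN]; exact one_ne_zero)
  have hmul : PowerSeries.mk (fun n => (weightedCompositions (blockWeight N e) n : ℝ)) *
      (denominatorPoly ℝ N e : PowerSeries ℝ) = ((1 - X ^ N : ℝ[X]) : PowerSeries ℝ) := by
    rw [mk_weightedCompositions_mul_denominatorPoly hN]
    simp
  filter_upwards [hsmall, hne] with x hx hpx
  simpa using PowerSeries.hasSum_coeff_mul_pow_of_mul_eq hmul
    (by simpa using summable_norm_weightedCompositions_mul_pow _ (blockWeight_le_sum hN) hx) hpx

end GeneratingFunction

end Zeck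

theorem generating_function_of_decomposition_counts_general (N : ℕ) (e : ℕ → ℕ)
    (hN : 2 ≤ N)
    (C : ℕ → ℕ) (hC0 : C 0 = 1)
    (hC : ∀ n, 1 ≤ n → C n = Set.ncard (Zeck.decompTuples N e n)) :
    ((PowerSeries.mk fun n => (C n : ℤ)) *
      (1 - (∑ k ∈ Finset.Ico 1 N, PowerSeries.C (R := ℤ) (e k : ℤ) * PowerSeries.X ^ k)
         - PowerSeries.C (R := ℤ) (1 + (e N : ℤ)) * PowerSeries.X ^ N)
      = 1 - PowerSeries.X ^ N) ∧
    ∃ r : ℝ, 0 < r ∧ ∀ x : ℝ, |x| < r →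
      HasSum (fun n : ℕ => (C n : ℝ) * x ^ n)
        ((1 - x ^ N) /
          (1 - (∑ k ∈ Finset.Ico 1 N, (e k : ℝ) * x ^ k) - (1 + (e N : ℝ)) * x ^ N)) := by
  obtain rfl : C = weightedCompositions (blockWeight N e) := by
    funext n
    rcases Nat.eq_zero_or_pos n with rfl | hn
    · rw [hC0, weightedCompositions_zero]
    · rw [hC n hn, ncard_decompTuples_s13 hn]
  refine ⟨?_, ?_⟩
  · rw [← coe_denominatorPoly]
    exact mk_weightedCompositions_mul_denominatorPoly (by omega)
  · obtain ⟨r, hr, h⟩ := Metric.eventually_nhds_iff.mp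
      (eventually_hasSum_weightedCompositions_mul_pow (e := e) (by omega : 1 ≤ N))
    refine ⟨r, hr, fun x hx => ?_⟩
    rw [← eval_denominatorPoly]
    exact h (by rwa [Real.dist_0_eq_abs])

/-- Generating function of the numbers `C_n`:
`(Σ C_n X^n)·(1 − Σ_{k=1}^{N−1} e_k X^k − (1+e_N) X^N) = 1 − X^N` as formal power
series over `ℤ`; equivalently `Σ C_n x^n` converges near `0` to `(1 − x^N)/f(x)`. -/
theorem generating_function_of_decomposition_counts (N : ℕ) (e : ℕ → ℕ)
    (hN : 2 ≤ N) (he : 1 ≤ e 1)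
    (C : ℕ → ℕ) (hC0 : C 0 = 1)
    (hC : ∀ n, 1 ≤ n → C n = Set.ncard (Zeck.decompTuples N e n)) :
    ((PowerSeries.mk fun n => (C n : ℤ)) *
      (1 - (∑ k ∈ Finset.Ico 1 N, PowerSeries.C (R := ℤ) (e k : ℤ) * PowerSeries.X ^ k)
         - PowerSeries.C (R := ℤ) (1 + (e N : ℤ)) * PowerSeries.X ^ N)
      = 1 - PowerSeries.X ^ N) ∧
    ∃ r : ℝ, 0 < r ∧ ∀ x : ℝ, |x| < r →
      HasSum (fun n : ℕ => (C n : ℝ) * x ^ n)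
        ((1 - x ^ N) /
          (1 - (∑ k ∈ Finset.Ico 1 N, (e k : ℝ) * x ^ k) - (1 + (e N : ℝ)) * x ^ N)) :=
  generating_function_of_decomposition_counts_general N e hN C hC0 hC
end
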